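/- arXiv:1011.0975 — 7 statements merged into one kernel-verified Lean document; each statement's English description precedes it below -/
import Mathlib

section
/- Let G be a finite group with N elements and let S_1,...,S_n, S_{n+1} be nonempty subsets of G. Let a be the number of tuples (g_1,...,g_n) in G^n such that the translates g_1 S_1, ..., g_n S_n are pairwise disjoint, and let b be the analogous count for S_1,...,S_{n+1}. Then (N - |S_{n+1}| * (|S_1|+...+|S_n|)) * a ≤ b ≤ (N - (|S_1|+...+|S_n|)) * a. -/
open Pointwise

/-- A (left-)packing of the subsets `S i` of a group `G` is a tuple `g`
such that the translates `g i • S i` are pairwise disjoint. -/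
def IsPacking {G : Type*} [Group G] [DecidableEq G] {n : ℕ} (S : Fin n → Finset G)
    (g : Fin n → G) : Prop :=
  ∀ i j, i ≠ j → Disjoint (g i • S i) (g j • S j)

section Aux

variable {G : Type*} [Group G] [DecidableEq G] {n : ℕ}

lemma disjoint_smul_iff_aux (A T : Finset G) (x : G) :
    Disjoint A (x • T) ↔ x ∉ A * T⁻¹ := by
  constructor
  · intro h hx
    obtain ⟨y, hy, z, hz, rfl⟩ := Finset.mem_mul.mp hx
    obtain ⟨t, ht, rfl⟩ := Finset.mem_inv.mp hz
    refine Finset.disjoint_left.mp h hy ?_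
    refine Finset.mem_smul_finset.mpr ⟨t, ht, ?_⟩
    simp [smul_eq_mul, mul_assoc]
  · intro h
    rw [Finset.disjoint_left]
    intro y hy hy'
    obtain ⟨t, ht, rfl⟩ := Finset.mem_smul_finset.mp hy'
    refine h (Finset.mem_mul.mpr ⟨x * t, hy, t⁻¹, Finset.inv_mem_inv ht, ?_⟩)
    simp [mul_assoc]

lemma isPacking_snoc_iff (S : Fin (n + 1) → Finset G) (g : Fin n → G) (x : G) :
    IsPacking S (Fin.snoc g x) ↔
      IsPacking (fun i => S i.castSucc) g ∧
        ∀ i : Fin n, Disjoint (g i • S i.castSucc) (x • S (Fin.last n)) := by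
  constructor
  · intro h
    refine ⟨fun i j hij => ?_, fun i => ?_⟩
    · have := h i.castSucc j.castSucc (by simpa using hij)
      simpa [Fin.snoc_castSucc] using this
    · have := h i.castSucc (Fin.last n) (Fin.castSucc_lt_last i).ne
      simpa [Fin.snoc_castSucc, Fin.snoc_last] using this
  · rintro ⟨h1, h2⟩ i j hij
    induction i using Fin.lastCases with
    | last =>
      induction j using Fin.lastCases with
      | last => exact absurd rfl hij
      | cast j => simpa [Fin.snoc_castSucc, Fin.snoc_last] using (h2 j).symm
    | cast i =>
      induction j using Fin.lastCases with
      | last => simpa [Fin.snoc_castSucc, Fin.snoc_last] using h2 i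
      | cast j =>
        have hne : i ≠ j := fun h => hij (by rw [h])
        simpa [Fin.snoc_castSucc] using h1 i j hne

lemma disjoint_op_smul {G : Type*} [Group G] [DecidableEq G] (c : Gᵐᵒᵖ)
    {A B : Finset G} (h : Disjoint A B) : Disjoint (c • A) (c • B) := by
  rw [← Finset.disjoint_coe, Finset.coe_smul_finset, Finset.coe_smul_finset,
    Set.disjoint_smul_set, Finset.disjoint_coe]
  exact h

end Aux

theorem stmt0 {G : Type*} [Group G] [Fintype G] [DecidableEq G] {n : ℕ}
    (S : Fin (n + 1) → Finset G) (hS : ∀ i, (S i).Nonempty)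
    (a b : ℕ)
    (ha : a = Nat.card {g : Fin n → G // IsPacking (fun i => S i.castSucc) g})
    (hb : b = Nat.card {g : Fin (n + 1) → G // IsPacking S g}) :
    ((Fintype.card G : ℤ) -
        (S (Fin.last n)).card * ∑ i : Fin n, ((S i.castSucc).card : ℤ)) * a ≤ b ∧
      (b : ℤ) ≤ ((Fintype.card G : ℤ) - ∑ i : Fin n, ((S i.castSucc).card : ℤ)) * a := by
  classical
  set N := Fintype.card G with hN
  set T := S (Fin.last n) with hT
  set S' : Fin n → Finset G := fun i => S i.castSucc with hS'def
  set P : (Fin n → G) → Prop := IsPacking S' with hPdef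
  set F : (Fin n → G) → Finset G :=
    fun g => Finset.univ.biUnion fun i => (g i • S' i) * T⁻¹ with hFdef
  -- key: membership characterization
  have key : ∀ (g : Fin n → G) (x : G),
      IsPacking S (Fin.snoc g x) ↔ P g ∧ x ∉ F g := by
    intro g x
    rw [isPacking_snoc_iff]
    refine and_congr_right fun _ => ?_
    rw [Finset.mem_biUnion]
    push_neg
    constructor
    · intro h i _
      exact (disjoint_smul_iff_aux _ _ _).mp (h i)
    · intro h i
      exact (disjoint_smul_iff_aux _ _ _).mpr (h i (Finset.mem_univ i))
  set A : Finset (Fin n → G) := Finset.univ.filter P with hA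
  have haA : a = A.card := by
    rw [ha, Nat.card_eq_fintype_card, Fintype.card_subtype]
  -- b as a sum
  have hbsum : b = ∑ g ∈ A, (N - (F g).card) := by
    rw [hb, Nat.card_eq_fintype_card]
    have e1 : {g : Fin (n + 1) → G // IsPacking S g} ≃
        {p : (Fin n → G) × G // P p.1 ∧ p.2 ∉ F p.1} := by
      refine ⟨fun h => ⟨(Fin.init h.1, h.1 (Fin.last n)), ?_⟩,
        fun p => ⟨Fin.snoc p.1.1 p.1.2, (key _ _).mpr p.2⟩, fun h => ?_, fun p => ?_⟩
      · exact (key _ _).mp (by rw [Fin.snoc_init_self]; exact h.2)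
      · exact Subtype.ext (Fin.snoc_init_self h.1)
      · exact Subtype.ext (Prod.ext (by simp) (by simp))
    rw [Fintype.card_congr (e1.trans (Equiv.subtypeProdEquivSigmaSubtype
      fun g x => P g ∧ x ∉ F g))]
    rw [Fintype.card_sigma, Finset.sum_filter]
    refine Finset.sum_congr rfl fun g _ => ?_
    by_cases hg : P g
    · rw [if_pos hg, Fintype.card_subtype]
      have : Finset.univ.filter (fun x => P g ∧ x ∉ F g) = (F g)ᶜ := by
        ext x; simp [hg]
      rw [this, Finset.card_compl]
    · rw [if_neg hg, Fintype.card_eq_zero_iff]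
      exact ⟨fun x => hg x.2.1⟩
  -- upper bound on |F g|
  have hFub : ∀ g : Fin n → G,
      ((F g).card : ℤ) ≤ (T.card : ℤ) * ∑ i : Fin n, ((S' i).card : ℤ) := by
    intro g
    have h1 : (F g).card ≤ ∑ i : Fin n, (S' i).card * T.card := by
      refine (Finset.card_biUnion_le).trans ?_
      refine Finset.sum_le_sum fun i _ => ?_
      calc ((g i • S' i) * T⁻¹).card ≤ (g i • S' i).card * T⁻¹.card :=
            Finset.card_mul_le
        _ = (S' i).card * T.card := by
            rw [Finset.card_smul_finset, Finset.card_inv]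
    calc ((F g).card : ℤ) ≤ ((∑ i : Fin n, (S' i).card * T.card : ℕ) : ℤ) := by
          exact_mod_cast h1
      _ = (T.card : ℤ) * ∑ i : Fin n, ((S' i).card : ℤ) := by
          push_cast
          rw [Finset.mul_sum]
          exact Finset.sum_congr rfl fun i _ => by ring
  -- lower bound on |F g| for packings
  have hFlb : ∀ g ∈ A, (∑ i : Fin n, ((S' i).card : ℤ)) ≤ ((F g).card : ℤ) := by
    intro g hg
    have hPg : P g := (Finset.mem_filter.mp hg).2
    obtain ⟨s, hs⟩ := hS (Fin.last n)
    set B : Fin n → Finset G := fun i => (g i • S' i) * {s⁻¹} with hB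
    have hBsub : ∀ i, B i ⊆ (g i • S' i) * T⁻¹ := fun i =>
      Finset.mul_subset_mul_left (by
        simp only [Finset.singleton_subset_iff]
        exact Finset.inv_mem_inv hs)
    have hBdisj : ∀ i ∈ (Finset.univ : Finset (Fin n)), ∀ j ∈ Finset.univ,
        i ≠ j → Disjoint (B i) (B j) := by
      intro i _ j _ hij
      simp only [hB, Finset.mul_singleton]
      exact disjoint_op_smul _ (hPg i j hij)
    have hBcard : ∀ i, (B i).card = (S' i).card := by
      intro i
      simp only [hB, Finset.mul_singleton]
      rw [Finset.card_smul_finset, Finset.card_smul_finset]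
    have h1 : (Finset.univ.biUnion B).card = ∑ i : Fin n, (S' i).card := by
      rw [Finset.card_biUnion hBdisj]
      exact Finset.sum_congr rfl fun i _ => hBcard i
    have h2 : Finset.univ.biUnion B ⊆ F g :=
      Finset.biUnion_subset.mpr fun i _ =>
        (hBsub i).trans
          (Finset.subset_biUnion_of_mem (fun i => (g i • S' i) * T⁻¹) (Finset.mem_univ i))
    have h3 : ∑ i : Fin n, (S' i).card ≤ (F g).card := h1 ▸ Finset.card_le_card h2
    calc (∑ i : Fin n, ((S' i).card : ℤ)) = ((∑ i : Fin n, (S' i).card : ℕ) : ℤ) := by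
          push_cast; rfl
      _ ≤ ((F g).card : ℤ) := by exact_mod_cast h3
  -- cast b to ℤ
  have hbint : (b : ℤ) = ∑ g ∈ A, ((N : ℤ) - ((F g).card : ℤ)) := by
    rw [hbsum, Nat.cast_sum]
    exact Finset.sum_congr rfl fun g _ => Nat.cast_sub (Finset.card_le_univ _)
  constructor
  · calc ((N : ℤ) - (T.card : ℤ) * ∑ i : Fin n, ((S' i).card : ℤ)) * a
        = ∑ _g ∈ A, ((N : ℤ) - (T.card : ℤ) * ∑ i : Fin n, ((S' i).card : ℤ)) := by
          rw [Finset.sum_const, nsmul_eq_mul, haA, mul_comm]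
      _ ≤ ∑ g ∈ A, ((N : ℤ) - ((F g).card : ℤ)) :=
          Finset.sum_le_sum fun g _ => sub_le_sub_left (hFub g) _
      _ = (b : ℤ) := hbint.symm
  · calc (b : ℤ) = ∑ g ∈ A, ((N : ℤ) - ((F g).card : ℤ)) := hbint
      _ ≤ ∑ _g ∈ A, ((N : ℤ) - ∑ i : Fin n, ((S' i).card : ℤ)) :=
          Finset.sum_le_sum fun g hg => sub_le_sub_left (hFlb g hg) _
      _ = ((N : ℤ) - ∑ i : Fin n, ((S' i).card : ℤ)) * a := by
          rw [Finset.sum_const, nsmul_eq_mul, haA, mul_comm]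
end

section
/- Let S_1,...,S_n be a generic family of nonempty subsets of a group G and let (g_1,...,g_n) ∈ G^n. Then the intersection graph I(g), with vertices {1,...,n} and an edge {i,j} whenever g_i S_i ∩ g_j S_j ≠ ∅, is a block graph: every edge and every cycle of I(g) lies in a unique maximal complete subgraph, and two distinct maximal complete subgraphs intersect in at most one vertex. -/
open Pointwise

/-- A family `S 1, ..., S n` of subsets of a group `G` is generic if for every
nonempty sequence of distinct indices `ι 1, ..., ι k` and every choice of elements
`g j ∈ (S (ι j))⁻¹ * S (ι j) \ {1}`, the ordered product `g 1 * g 2 * ⋯ * g k ≠ 1`. -/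
def IsGeneric {G : Type*} [Group G] {n : ℕ} (S : Fin n → Set G) : Prop :=
  ∀ k : ℕ, 1 ≤ k → ∀ ι : Fin k → Fin n, Function.Injective ι →
    ∀ g : Fin k → G, (∀ j, g j ∈ (S (ι j))⁻¹ * S (ι j) ∧ g j ≠ 1) →
      (List.ofFn g).prod ≠ 1

section Aux

variable {G : Type*} [Group G] {n : ℕ} {S : Fin n → Set G} {g : Fin n → G}

/-- A quotient of two points of a translate lies in `S⁻¹ S`. -/
lemma memDD {i : Fin n} {x y : G} (hx : x ∈ g i • S i) (hy : y ∈ g i • S i) :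
    x⁻¹ * y ∈ (S i)⁻¹ * S i := by
  obtain ⟨a, ha, rfl⟩ := hx
  obtain ⟨b, hb, rfl⟩ := hy
  have h : (g i * a)⁻¹ * (g i * b) = a⁻¹ * b := by group
  show (g i * a)⁻¹ * (g i * b) ∈ (S i)⁻¹ * S i
  rw [h]
  exact Set.mul_mem_mul (Set.inv_mem_inv.mpr ha) hb

/-- List version of genericity: a product of elements of `S i⁻¹ S i` over distinct
indices can only be `1` if every factor is `1`. -/
lemma gen_list (hgen : IsGeneric S) (l : List (Fin n × G))
    (hnd : (l.map Prod.fst).Nodup)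
    (hmem : ∀ q ∈ l, q.2 ∈ (S q.1)⁻¹ * S q.1)
    (hprod : (l.map Prod.snd).prod = 1) : ∀ q ∈ l, q.2 = 1 := by
  classical
  by_contra h
  push_neg at h
  obtain ⟨q0, hq0l, hq0⟩ := h
  set l' := l.filter (fun q => q.2 ≠ 1) with hl'def
  have hsub : l'.Sublist l := List.filter_sublist
  have hq0' : q0 ∈ l' := List.mem_filter.mpr ⟨hq0l, by simpa using hq0⟩
  have hlen : 1 ≤ l'.length := List.length_pos_iff.mpr (List.ne_nil_of_mem hq0')
  have hnd' : (l'.map Prod.fst).Nodup := (hsub.map Prod.fst).nodup hnd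
  -- the filtered product equals the original product
  have hprodf : ∀ m : List (Fin n × G),
      (((m.filter (fun q => q.2 ≠ 1)).map Prod.snd)).prod = (m.map Prod.snd).prod := by
    intro m
    induction m with
    | nil => simp
    | cons q m ih =>
      by_cases hq : q.2 = 1
      · simpa [List.filter_cons, hq] using ih
      · simpa [List.filter_cons, hq] using ih
  have hprod' : (l'.map Prod.snd).prod = 1 := by
    rw [hl'def, hprodf, hprod]
  -- now apply genericity
  have hinj : Function.Injective (fun m : Fin l'.length => (l'.get m).1) := by
    intro a b hab
    have hga : Function.Injective (l'.map Prod.fst).get :=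
      List.nodup_iff_injective_get.mp hnd'
    have hlm : (l'.map Prod.fst).length = l'.length := List.length_map _
    have : (l'.map Prod.fst).get (Fin.cast hlm.symm a) =
        (l'.map Prod.fst).get (Fin.cast hlm.symm b) := by
      simpa [List.get_eq_getElem, List.getElem_map] using hab
    have h2 := hga this
    rw [Fin.ext_iff] at h2 ⊢
    simpa using h2
  have hofn : List.ofFn (fun m : Fin l'.length => (l'.get m).2) = l'.map Prod.snd := by
    have h1 : (List.ofFn l'.get).map Prod.snd = List.ofFn (Prod.snd ∘ l'.get) :=
      List.map_ofFn
    have h2 : List.ofFn (Prod.snd ∘ l'.get) =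
        List.ofFn (fun m : Fin l'.length => (l'.get m).2) := rfl
    rw [← h2, ← h1, List.ofFn_get]
  refine hgen l'.length hlen (fun m => (l'.get m).1) hinj (fun m => (l'.get m).2)
    (fun m => ?_) (by rw [hofn]; exact hprod')
  have hm : l'.get m ∈ l' := List.get_mem l' m
  refine ⟨hmem _ (hsub.mem hm), ?_⟩
  have := List.mem_filter.mp hm
  simpa using this.2

variable {Γ : SimpleGraph (Fin n)}

/-- Along any walk, the quotient of a point of the first translate and a point of the last
translate factors as a product of elements of `S w⁻¹ S w` over the support, and if all
factors are trivial then the point belongs to every translate along the walk. -/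
lemma chain_aux (hΓ : ∀ i j, Γ.Adj i j ↔ i ≠ j ∧ (g i • S i ∩ g j • S j).Nonempty)
    {u v : Fin n} (p : Γ.Walk u v) :
    ∀ x y : G, x ∈ g u • S u → y ∈ g v • S v →
    ∃ c : List (Fin n × G), c.map Prod.fst = p.support ∧
      (∀ q ∈ c, q.2 ∈ (S q.1)⁻¹ * S q.1) ∧
      (c.map Prod.snd).prod = x⁻¹ * y ∧
      ((∀ q ∈ c, q.2 = 1) → ∀ w ∈ p.support, x ∈ g w • S w) := by
  induction p with
  | @nil u =>
    intro x y hx hy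
    refine ⟨[(u, x⁻¹ * y)], by simp, by simpa using memDD hx hy, by simp, ?_⟩
    intro _ w hw
    rw [SimpleGraph.Walk.support_nil, List.mem_singleton] at hw
    subst hw; exact hx
  | @cons u b v h p ih =>
    intro x y hx hy
    obtain ⟨-, w, hw1, hw2⟩ := (hΓ u b).mp h
    obtain ⟨c, hc1, hc2, hc3, hc4⟩ := ih w y hw2 hy
    refine ⟨(u, x⁻¹ * w) :: c, ?_, ?_, ?_, ?_⟩
    · rw [List.map_cons, hc1, SimpleGraph.Walk.support_cons]
    · rintro q hq
      rcases List.mem_cons.mp hq with rfl | hq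
      · exact memDD hx hw1
      · exact hc2 q hq
    · rw [List.map_cons, List.prod_cons, hc3]; group
    · intro hall w' hw'
      have hxw : x = w := by
        have := hall _ List.mem_cons_self
        simpa [inv_mul_eq_one] using this
      rw [SimpleGraph.Walk.support_cons] at hw'
      rcases List.mem_cons.mp hw' with rfl | hw'
      · exact hx
      · rw [hxw]
        exact hc4 (fun q hq => hall q (List.mem_cons_of_mem _ hq)) w' hw'

/-- If a point lies in the translates at both endpoints of a path, it lies in every
translate along the path. -/
lemma path_common (hgen : IsGeneric S)
    (hΓ : ∀ i j, Γ.Adj i j ↔ i ≠ j ∧ (g i • S i ∩ g j • S j).Nonempty)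
    {u v : Fin n} (p : Γ.Walk u v) (hnd : p.support.Nodup)
    {x : G} (hu : x ∈ g u • S u) (hv : x ∈ g v • S v) :
    ∀ w ∈ p.support, x ∈ g w • S w := by
  obtain ⟨c, hc1, hc2, hc3, hc4⟩ := chain_aux hΓ p x x hu hv
  exact hc4 (gen_list hgen c (by rw [hc1]; exact hnd) hc2 (by rw [hc3]; group))

end Aux

/-- The intersection graph of the translates `g i • S i` is a block graph:
every edge and every cycle lies in a unique maximal complete subgraph, and two
distinct maximal complete subgraphs meet in at most one vertex. -/
theorem stmt6 {G : Type*} [Group G] {n : ℕ} (S : Fin n → Set G)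
    (hne : ∀ i, (S i).Nonempty) (hgen : IsGeneric S)
    (g : Fin n → G) (Γ : SimpleGraph (Fin n))
    (hΓ : ∀ i j, Γ.Adj i j ↔ i ≠ j ∧ (g i • S i ∩ g j • S j).Nonempty) :
    (∀ i j, Γ.Adj i j → ∃! K : Set (Fin n), Γ.IsClique K ∧
        (∀ K', Γ.IsClique K' → K ⊆ K' → K' = K) ∧ i ∈ K ∧ j ∈ K) ∧
      (∀ (u : Fin n) (p : Γ.Walk u u), p.IsCycle → ∃! K : Set (Fin n), Γ.IsClique K ∧
        (∀ K', Γ.IsClique K' → K ⊆ K' → K' = K) ∧ ∀ v ∈ p.support, v ∈ K) ∧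
      (∀ K K' : Set (Fin n),
        (Γ.IsClique K ∧ ∀ L, Γ.IsClique L → K ⊆ L → L = K) →
        (Γ.IsClique K' ∧ ∀ L, Γ.IsClique L → K' ⊆ L → L = K') →
        K ≠ K' → (K ∩ K').Subsingleton) := by
  classical
  -- if a point lies in two translates of a clique, it lies in all translates of the clique
  have clique_sub : ∀ (K : Set (Fin n)), Γ.IsClique K → ∀ i j, i ∈ K → j ∈ K → i ≠ j →
      ∀ x : G, x ∈ g i • S i → x ∈ g j • S j → ∀ k ∈ K, x ∈ g k • S k := by
    intro K hK i j hi hj hij x hxi hxj k hk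
    by_cases hki : k = i
    · subst hki; exact hxi
    by_cases hkj : k = j
    · subst hkj; exact hxj
    have h1 : Γ.Adj i k := hK hi hk (fun h => hki h.symm)
    have h2 : Γ.Adj k j := hK hk hj hkj
    have hnd : (SimpleGraph.Walk.cons h1 h2.toWalk).support.Nodup := by
      simp [SimpleGraph.Walk.support_cons, List.nodup_cons]
      exact ⟨⟨fun h => hki h.symm, hij⟩, fun h => hkj h⟩
    have := path_common hgen hΓ (SimpleGraph.Walk.cons h1 h2.toWalk) hnd hxi hxj
    exact this k (by simp [SimpleGraph.Walk.support_cons])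
  have Cl_clique : ∀ x : G, Γ.IsClique {k | x ∈ g k • S k} := by
    intro x a ha b hb hab
    exact (hΓ a b).mpr ⟨hab, x, ha, hb⟩
  have Cl_max : ∀ (x : G) (i j : Fin n), i ≠ j → x ∈ g i • S i → x ∈ g j • S j →
      ∀ K', Γ.IsClique K' → {k | x ∈ g k • S k} ⊆ K' → K' = {k | x ∈ g k • S k} := by
    intro x i j hij hxi hxj K' hK' hsub
    refine Set.Subset.antisymm (fun k hk => ?_) hsub
    exact clique_sub K' hK' i j (hsub hxi) (hsub hxj) hij x hxi hxj k hk
  refine ⟨?_, ?_, ?_⟩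
  · -- edges
    intro i j hij
    obtain ⟨hne', x, hxi, hxj⟩ := (hΓ i j).mp hij
    refine ⟨{k | x ∈ g k • S k}, ⟨Cl_clique x, Cl_max x i j hne' hxi hxj, hxi, hxj⟩, ?_⟩
    rintro K' ⟨hK'c, hK'max, hiK', hjK'⟩
    have hsub : K' ⊆ {k | x ∈ g k • S k} := fun k hk =>
      clique_sub K' hK'c i j hiK' hjK' hne' x hxi hxj k hk
    exact (hK'max _ (Cl_clique x) hsub).symm
  · -- cycles
    intro u p hp
    cases p with
    | nil => exact (hp.ne_nil rfl).elim
    | @cons _ b _ h q =>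
      obtain ⟨hub, x, hxu, hxb⟩ := (hΓ u b).mp h
      have hndq : q.support.Nodup := by
        have := hp.support_nodup
        simpa [SimpleGraph.Walk.support_cons] using this
      have hq := path_common hgen hΓ q hndq hxb hxu
      have hall : ∀ w ∈ (SimpleGraph.Walk.cons h q).support, x ∈ g w • S w := by
        intro w hw
        rw [SimpleGraph.Walk.support_cons] at hw
        rcases List.mem_cons.mp hw with rfl | hw
        · exact hxu
        · exact hq w hw
      refine ⟨{k | x ∈ g k • S k}, ⟨Cl_clique x, Cl_max x u b hub hxu hxb, hall⟩, ?_⟩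
      rintro K' ⟨hK'c, hK'max, hK'all⟩
      have huK' : u ∈ K' := hK'all u (SimpleGraph.Walk.start_mem_support _)
      have hbK' : b ∈ K' := hK'all b (by
        rw [SimpleGraph.Walk.support_cons]
        exact List.mem_cons_of_mem _ (SimpleGraph.Walk.start_mem_support _))
      have hsub : K' ⊆ {k | x ∈ g k • S k} := fun k hk =>
        clique_sub K' hK'c u b huK' hbK' hub x hxu hxb k hk
      exact (hK'max _ (Cl_clique x) hsub).symm
  · -- maximal cliques intersect in at most one vertex
    rintro K K' ⟨hKc, hKm⟩ ⟨hK'c, hK'm⟩ hne' i hi j hj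
    by_contra hij
    have hadj : Γ.Adj i j := hKc hi.1 hj.1 hij
    obtain ⟨-, x, hxi, hxj⟩ := (hΓ i j).mp hadj
    have h1 : K ⊆ {k | x ∈ g k • S k} := fun k hk =>
      clique_sub K hKc i j hi.1 hj.1 hij x hxi hxj k hk
    have h2 : K' ⊆ {k | x ∈ g k • S k} := fun k hk =>
      clique_sub K' hK'c i j hi.2 hj.2 hij x hxi hxj k hk
    exact hne' ((hKm _ (Cl_clique x) h1).symm.trans (hK'm _ (Cl_clique x) h2))
end

section
/- Let S_1,...,S_n be a generic family of nonempty subsets of a group G and let (g_1,...,g_n) ∈ G^n. If i_1, i_2, ..., i_k, i_{k+1}=i_1 is a cycle in the intersection graph of (g_1,...,g_n) (i.e. g_{i_j} S_{i_j} ∩ g_{i_{j+1}} S_{i_{j+1}} ≠ ∅ for all j), then there exists a unique element a ∈ G such that g_{i_l} S_{i_l} ∩ g_{i_m} S_{i_m} = {a} for every pair of distinct indices i_l, i_m in the cycle; in particular all vertices of the cycle are pairwise adjacent in the intersection graph. -/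
open Pointwise

private lemma myFilterProd {G : Type*} [Group G] [DecidableEq G] (L : List G) :
    (L.filter (fun x => decide (x ≠ 1))).prod = L.prod := by
  induction L with
  | nil => simp
  | cons x L ih =>
    by_cases hx : x = 1
    · subst hx; simpa [List.filter_cons] using ih
    · simp only [ne_eq, decide_not] at ih
      simp [List.filter_cons, hx, ih]

private lemma myTelescope {G : Type*} [Group G] (f : ℕ → G) (m : ℕ) :
    (List.ofFn (fun j : Fin m => (f j)⁻¹ * f (j + 1))).prod = (f 0)⁻¹ * f m := by
  induction m with
  | zero => simp
  | succ m ih =>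
    rw [List.ofFn_succ']
    simp only [List.concat_eq_append, List.prod_append, List.prod_cons, List.prod_nil,
      Fin.coe_castSucc, Fin.val_last, mul_one]
    rw [ih]
    group

private lemma myMemInvMul {G : Type*} [Group G] {h : G} {T : Set G} {x y : G}
    (hx : x ∈ h • T) (hy : y ∈ h • T) : x⁻¹ * y ∈ T⁻¹ * T := by
  obtain ⟨s, hs, rfl⟩ := hx
  obtain ⟨t, ht, rfl⟩ := hy
  have e : (h • s)⁻¹ * (h • t) = s⁻¹ * t := by simp only [smul_eq_mul]; group
  rw [e]
  exact Set.mul_mem_mul (Set.inv_mem_inv.mpr hs) ht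

private lemma myAllOne {G : Type*} [Group G] [DecidableEq G] {n : ℕ} {S : Fin n → Set G}
    (hgen : IsGeneric S) (P : List (Fin n × G)) (hnd : (P.map Prod.fst).Nodup)
    (hmem : ∀ p ∈ P, p.2 ∈ (S p.1)⁻¹ * S p.1) (hprod : (P.map Prod.snd).prod = 1) :
    ∀ p ∈ P, p.2 = 1 := by
  by_contra hcon
  push_neg at hcon
  obtain ⟨p₀, hp₀, hp₀1⟩ := hcon
  set Q : List (Fin n × G) := P.filter (fun p => decide (p.2 ≠ 1)) with hQ
  have hQsub : Q.Sublist P := List.filter_sublist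
  have hQne : Q ≠ [] := List.ne_nil_of_mem (List.mem_filter.mpr ⟨hp₀, by simpa using hp₀1⟩)
  have hlen : 1 ≤ Q.length := List.length_pos_iff.mpr hQne
  have hndQ : (Q.map Prod.fst).Nodup := hnd.sublist (hQsub.map _)
  have hinjget : Function.Injective fun i : Fin Q.length => (Q.get i).1 := by
    have h1 : Function.Injective (Q.map Prod.fst).get := List.nodup_iff_injective_get.mp hndQ
    intro i j hij
    have h2 : (Q.map Prod.fst).get (Fin.cast (Q.length_map Prod.fst).symm i) =
        (Q.map Prod.fst).get (Fin.cast (Q.length_map Prod.fst).symm j) := by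
      simpa using hij
    have h3 := congrArg Fin.val (h1 h2)
    simp only [Fin.coe_cast] at h3
    exact Fin.ext h3
  have hofn : List.ofFn (fun i : Fin Q.length => (Q.get i).2) = Q.map Prod.snd := by
    apply List.ext_get
    · simp
    · intro i h1 h2
      simp [List.get_ofFn]
  have hQprod : (Q.map Prod.snd).prod = 1 := by
    have hmf : Q.map Prod.snd = (P.map Prod.snd).filter (fun x => decide (x ≠ 1)) := by
      rw [hQ]
      exact (List.filter_map (p := fun x => decide (x ≠ 1)) (f := Prod.snd) (l := P)).symm
    rw [hmf, myFilterProd, hprod]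
  apply hgen Q.length hlen (fun i => (Q.get i).1) hinjget (fun i => (Q.get i).2)
  · intro j
    have hjQ : Q.get j ∈ Q := by
      have := List.get_mem Q j
      simpa using this
    refine ⟨hmem _ (hQsub.subset hjQ), ?_⟩
    have := (List.mem_filter.mp hjQ).2
    simpa using this
  · rw [hofn, hQprod]

private lemma myAtMost {G : Type*} [Group G] {n : ℕ} {S : Fin n → Set G}
    (hgen : IsGeneric S) {i j : Fin n} (hij : i ≠ j) (gi gj : G) {x y : G}
    (hx : x ∈ gi • S i ∩ gj • S j) (hy : y ∈ gi • S i ∩ gj • S j) : x = y := by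
  by_contra hxy
  have h1 : x⁻¹ * y ∈ (S i)⁻¹ * S i := myMemInvMul hx.1 hy.1
  have h2 : y⁻¹ * x ∈ (S j)⁻¹ * S j := myMemInvMul hy.2 hx.2
  have hinj2 : Function.Injective ![i, j] := by
    intro p q hpq
    fin_cases p <;> fin_cases q <;> simp_all
  apply hgen 2 (by norm_num) ![i, j] hinj2 ![x⁻¹ * y, y⁻¹ * x]
  · intro jj
    fin_cases jj
    · exact ⟨h1, fun h => hxy (inv_mul_eq_one.mp h)⟩
    · exact ⟨h2, fun h => hxy (inv_mul_eq_one.mp h).symm⟩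
  · have hl : List.ofFn ![x⁻¹ * y, y⁻¹ * x] = [x⁻¹ * y, y⁻¹ * x] := by
      simp [List.ofFn_succ, Fin.succ_zero_eq_one]
    rw [hl]
    simp only [List.prod_cons, List.prod_nil, mul_one]
    group

/-- Given a cycle `ι 0, ι 1, ..., ι (k+1), ι 0` of distinct vertices in the
intersection graph of a generic family, there is a unique element `a ∈ G` such that
any two of the corresponding translates intersect exactly in `{a}`. -/
theorem stmt7 {G : Type*} [Group G] {n : ℕ} (S : Fin n → Set G)
    (hne : ∀ i, (S i).Nonempty) (hgen : IsGeneric S)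
    (g : Fin n → G) (k : ℕ) (ι : Fin (k + 2) → Fin n)
    (hinj : Function.Injective ι)
    (hcyc : ∀ j : Fin (k + 2),
      (g (ι j) • S (ι j) ∩ g (ι (j + 1)) • S (ι (j + 1))).Nonempty) :
    ∃! a : G, ∀ l m : Fin (k + 2), l ≠ m →
      g (ι l) • S (ι l) ∩ g (ι m) • S (ι m) = {a} := by
  classical
  choose c hc using hcyc
  have hcl : ∀ j, c j ∈ g (ι j) • S (ι j) := fun j => (hc j).1
  have hcr : ∀ j, c j ∈ g (ι (j + 1)) • S (ι (j + 1)) := fun j => (hc j).2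
  open Fin.NatCast in
  have hcast : ∀ j : Fin (k + 2), (((j : ℕ) + 1 : ℕ) : Fin (k + 2)) = j + 1 := by
    intro j
    simp [Fin.cast_val_eq_self]
  set P : List (Fin n × G) :=
    List.ofFn (fun j : Fin (k + 2) => (ι (j + 1), (c j)⁻¹ * c (j + 1))) with hP
  have hnd : (P.map Prod.fst).Nodup := by
    rw [hP, List.map_ofFn]
    exact List.nodup_ofFn.mpr (hinj.comp (add_left_injective 1))
  have hmem : ∀ p ∈ P, p.2 ∈ (S p.1)⁻¹ * S p.1 := by
    intro p hp
    rw [hP, List.mem_ofFn] at hp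
    obtain ⟨j, rfl⟩ := hp
    exact myMemInvMul (hcr j) (hcl (j + 1))
  have hprod : (P.map Prod.snd).prod = 1 := by
    rw [hP, List.map_ofFn]
    open Fin.NatCast in
    have heq : ((fun p : Fin n × G => p.2) ∘
        fun j : Fin (k + 2) => (ι (j + 1), (c j)⁻¹ * c (j + 1))) =
        fun j : Fin (k + 2) =>
          (c ((j : ℕ) : Fin (k + 2)))⁻¹ * c ((((j : ℕ) + 1 : ℕ)) : Fin (k + 2)) := by
      funext j
      simp [Fin.cast_val_eq_self, hcast j]
    open Fin.NatCast in
    rw [heq, myTelescope (fun t : ℕ => c ((t : ℕ) : Fin (k + 2))) (k + 2)]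
    simp [Fin.natCast_self]
  have hone := myAllOne hgen P hnd hmem hprod
  have hstep : ∀ j : Fin (k + 2), c (j + 1) = c j := by
    intro j
    have hmemP : (ι (j + 1), (c j)⁻¹ * c (j + 1)) ∈ P := by
      rw [hP, List.mem_ofFn]; exact ⟨j, rfl⟩
    have := hone _ hmemP
    exact inv_mul_eq_one.mp this |>.symm
  open Fin.NatCast in
  have hconstN : ∀ t : ℕ, c ((t : ℕ) : Fin (k + 2)) = c 0 := by
    intro t
    induction t with
    | zero => simp
    | succ t ih =>
      have hc1 : ((t + 1 : ℕ) : Fin (k + 2)) = ((t : ℕ) : Fin (k + 2)) + 1 := by push_cast; ring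
      rw [hc1, hstep, ih]
  have hconst : ∀ j : Fin (k + 2), c j = c 0 := by
    intro j
    have := hconstN (j : ℕ)
    rwa [Fin.cast_val_eq_self] at this
  have hmemall : ∀ j, c 0 ∈ g (ι j) • S (ι j) := by
    intro j
    rw [← hconst j]
    exact hcl j
  have hprop : ∀ l m : Fin (k + 2), l ≠ m →
      g (ι l) • S (ι l) ∩ g (ι m) • S (ι m) = {c 0} := by
    intro l m hlm
    apply Set.eq_singleton_iff_unique_mem.mpr
    refine ⟨⟨hmemall l, hmemall m⟩, ?_⟩
    intro x hx
    exact myAtMost hgen (hinj.ne hlm) (g (ι l)) (g (ι m)) hx ⟨hmemall l, hmemall m⟩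
  refine ⟨c 0, hprop, ?_⟩
  intro a' ha'
  have h01 : (0 : Fin (k + 2)) ≠ 1 := by
    intro h
    simpa using congrArg Fin.val h
  have h1 := ha' 0 1 h01
  rw [hprop 0 1 h01] at h1
  exact (Set.singleton_eq_singleton_iff.mp h1).symm
end

section
/- Define integers t_{i,j}(n) for n ≥ 1 by t_{2,0}(1)=1, t_{i,j}(n)=0 if i ≤ n or j < 0 or i+j > 2n, and t_{i,j}(n) = (i-2) t_{i-1,j}(n-1) + t_{i-1,j-1}(n-1) + (i-3) t_{i-2,j}(n-1) for n ≥ 2. Then for all n ≥ 1, Σ_{k=0}^{n-1} t_{n+1,k}(n) x^{k+1} = x(x+1)(x+2)···(x+n-1) as polynomials in x; equivalently, the first-row entries t_{n+1,k}(n) are unsigned Stirling numbers of the first kind. -/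
/-- The integers `t_{i,j}(n)`: `t_{2,0}(1) = 1`,
`t_{i,j}(n) = (i-2) t_{i-1,j}(n-1) + t_{i-1,j-1}(n-1) + (i-3) t_{i-2,j}(n-1)` for `n ≥ 2`,
and `t_{i,j}(n) = 0` whenever `i ≤ n`, `j < 0` or `i + j > 2n`. -/
def tt : ℕ → ℤ → ℤ → ℤ
  | 0, _, _ => 0
  | 1, i, j => if i = 2 ∧ j = 0 then 1 else 0
  | n + 2, i, j =>
      if i ≤ (n : ℤ) + 2 ∨ j < 0 ∨ 2 * ((n : ℤ) + 2) < i + j then 0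
      else (i - 2) * tt (n + 1) (i - 1) j + tt (n + 1) (i - 1) (j - 1)
        + (i - 3) * tt (n + 1) (i - 2) j

lemma tt_diag (n : ℕ) (j : ℤ) : tt (n + 1) ((n : ℤ) + 1) j = 0 := by
  cases n with
  | zero => simp [tt]
  | succ k =>
      rw [show k + 1 + 1 = k + 2 from rfl, tt]
      rw [if_pos]
      left; push_cast; linarith

lemma tt_neg (n : ℕ) (i j : ℤ) (hj : j < 0) : tt n i j = 0 := by
  match n with
  | 0 => rfl
  | 1 => simp [tt]; intro _ h; omega
  | n + 2 => rw [tt, if_pos]; right; left; exact hj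

lemma tt_high (n : ℕ) : tt (n + 1) ((n : ℤ) + 2) ((n : ℤ) + 1) = 0 := by
  cases n with
  | zero => simp [tt]
  | succ k =>
      rw [show k + 1 + 1 = k + 2 from rfl, tt, if_pos]
      right; right; push_cast; linarith

lemma tt_rec (n : ℕ) (j : ℤ) (h0 : 0 ≤ j) (h1 : j ≤ (n : ℤ) + 1) :
    tt (n + 2) ((n : ℤ) + 3) j =
      ((n : ℤ) + 1) * tt (n + 1) ((n : ℤ) + 2) j + tt (n + 1) ((n : ℤ) + 2) (j - 1) := by
  rw [tt, if_neg]
  · have h2 : (n : ℤ) + 3 - 1 = (n : ℤ) + 2 := by ring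
    have h3 : (n : ℤ) + 3 - 2 = (n : ℤ) + 1 := by ring
    rw [h2, h3, tt_diag]
    ring
  · push_neg
    refine ⟨by linarith, h0, by linarith⟩

/-- The first row of the triangle `T(n)` consists of the unsigned Stirling numbers
of the first kind: `∑_{k=0}^{n-1} t_{n+1,k}(n) x^{k+1} = x(x+1)⋯(x+n-1)`. -/
theorem stmt8 (n : ℕ) (hn : 1 ≤ n) :
    ∑ k ∈ Finset.range n, Polynomial.C (tt n ((n : ℤ) + 1) (k : ℤ)) *
        Polynomial.X ^ (k + 1) =
      ∏ j ∈ Finset.range n, (Polynomial.X + Polynomial.C (j : ℤ)) := by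
  obtain ⟨m, rfl⟩ : ∃ m, n = m + 1 := ⟨n - 1, by omega⟩
  clear hn
  induction m with
  | zero => simp [tt]
  | succ n ih =>
      push_cast at ih
      have hcast : ((n : ℤ) + 1 + 1) + 1 = (n : ℤ) + 3 := by ring
      push_cast [hcast]
      have step : ∀ k ∈ Finset.range (n + 2),
          Polynomial.C (tt (n + 2) ((n : ℤ) + 3) (k : ℤ)) * Polynomial.X ^ (k + 1)
          = Polynomial.C (((n : ℤ) + 1) * tt (n + 1) ((n : ℤ) + 2) (k : ℤ)) *
              Polynomial.X ^ (k + 1)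
            + Polynomial.C (tt (n + 1) ((n : ℤ) + 2) ((k : ℤ) - 1)) *
              Polynomial.X ^ (k + 1) := by
        intro k hk
        rw [Finset.mem_range] at hk
        rw [tt_rec n k (by positivity) (by exact_mod_cast by omega), map_add, add_mul]
      rw [Finset.sum_congr rfl step, Finset.sum_add_distrib]
      have hA : ∑ k ∈ Finset.range (n + 2),
          Polynomial.C (((n : ℤ) + 1) * tt (n + 1) ((n : ℤ) + 2) (k : ℤ)) *
            Polynomial.X ^ (k + 1)
          = Polynomial.C ((n : ℤ) + 1) *
            ∑ k ∈ Finset.range (n + 1),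
              Polynomial.C (tt (n + 1) ((n : ℤ) + 2) (k : ℤ)) * Polynomial.X ^ (k + 1) := by
        rw [Finset.sum_range_succ]
        have : ((n + 1 : ℕ) : ℤ) = (n : ℤ) + 1 := by push_cast; ring
        rw [this, tt_high, Finset.mul_sum]
        simp [map_mul, mul_assoc]
      have hB : ∑ k ∈ Finset.range (n + 2),
          Polynomial.C (tt (n + 1) ((n : ℤ) + 2) ((k : ℤ) - 1)) * Polynomial.X ^ (k + 1)
          = Polynomial.X *
            ∑ k ∈ Finset.range (n + 1),
              Polynomial.C (tt (n + 1) ((n : ℤ) + 2) (k : ℤ)) * Polynomial.X ^ (k + 1) := by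
        rw [Finset.sum_range_succ']
        rw [show ((0 : ℕ) : ℤ) - 1 = -1 by norm_num, tt_neg _ _ _ (by norm_num)]
        rw [Finset.mul_sum]
        simp only [map_zero, zero_mul, add_zero]
        refine Finset.sum_congr rfl fun k _ => ?_
        have : ((k + 1 : ℕ) : ℤ) - 1 = (k : ℤ) := by push_cast; ring
        rw [this]
        ring
      rw [hA, hB]
      have hcast2 : ((n : ℤ) + 1) + 1 = (n : ℤ) + 2 := by ring
      rw [show ((n : ℤ) + 1 + 1) = (n : ℤ) + 2 from hcast2] at ih
      rw [Finset.prod_range_succ, ih, ← add_mul]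
      push_cast
      ring
end

section
/- The functional equation (1-σ_1 x) U(x,σ_1,σ_2,σ_3,...) = U(x, 1+σ_1, σ_1+σ_2, σ_2+σ_3, ...) has at most one formal power series solution U = 1 + Σ_{n≥1} U_n x^n with coefficients U_n ∈ ℤ[σ_1,σ_2,...] such that for every n ≥ 1, U_n has degree at most 2n with respect to the grading deg σ_i = i and lies in the ideal generated by σ_{n+1}, σ_{n+2}, ..., σ_{2n}. -/
/-- We encode the variable `σ_{i+1}` as `MvPolynomial.X i`, so the variables are
`σ_1, σ_2, σ_3, …`.  `GoodSolution U` says that `U = 1 + ∑_{n ≥ 1} U_n x^n` is a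
formal power series with coefficients `U_n ∈ ℤ[σ_1, σ_2, …]` such that each `U_n`
(for `n ≥ 1`) has degree at most `2n` with respect to the grading `deg σ_i = i`,
lies in the ideal generated by `σ_{n+1}, …, σ_{2n}`, and `U` satisfies the
functional equation `(1 - σ_1 x) U(x, σ_1, σ_2, …) = U(x, 1 + σ_1, σ_1 + σ_2, …)`. -/
def GoodSolution (U : PowerSeries (MvPolynomial ℕ ℤ)) : Prop :=
  PowerSeries.coeff 0 U = 1 ∧
  (∀ n : ℕ, 1 ≤ n →
    (PowerSeries.coeff n U).weightedTotalDegree (fun i => i + 1) ≤ 2 * n ∧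
    PowerSeries.coeff n U ∈
      Ideal.span ((fun k => (MvPolynomial.X k : MvPolynomial ℕ ℤ)) ''
        Set.Icc n (2 * n - 1))) ∧
  (1 - PowerSeries.C (MvPolynomial.X 0) * PowerSeries.X) * U =
    PowerSeries.map (MvPolynomial.aeval fun i : ℕ =>
      if i = 0 then 1 + MvPolynomial.X 0
      else MvPolynomial.X (i - 1) + MvPolynomial.X i :
        MvPolynomial ℕ ℤ →ₐ[ℤ] MvPolynomial ℕ ℤ).toRingHom U


open MvPolynomial

noncomputable def phi : MvPolynomial ℕ ℤ →ₐ[ℤ] MvPolynomial ℕ ℤ :=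
  MvPolynomial.aeval fun i : ℕ =>
      if i = 0 then 1 + MvPolynomial.X 0
      else MvPolynomial.X (i - 1) + MvPolynomial.X i

noncomputable def psiFun : ℕ → MvPolynomial ℕ ℤ
  | 0 => X 0 - 1
  | (k+1) => X (k+1) - psiFun k

lemma psi_phi (p : MvPolynomial ℕ ℤ) : aeval psiFun (phi p) = p := by
  have h : (aeval psiFun).comp phi = AlgHom.id ℤ (MvPolynomial ℕ ℤ) := by
    apply algHom_ext
    intro k
    cases k with
    | zero => simp [phi, psiFun]
    | succ k => simp [phi, psiFun]
  calc aeval psiFun (phi p) = ((aeval psiFun).comp phi) p := rfl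
    _ = p := by rw [h]; rfl

lemma phi_inj : Function.Injective phi := by
  intro a b hab
  have := congrArg (aeval psiFun) hab
  rwa [psi_phi, psi_phi] at this

lemma struct (n : ℕ) (hn : 1 ≤ n) (P : MvPolynomial ℕ ℤ)
    (hdeg : P.weightedTotalDegree (fun i => i + 1) ≤ 2 * n)
    (hmem : P ∈ Ideal.span ((fun k => (MvPolynomial.X k : MvPolynomial ℕ ℤ)) ''
        Set.Icc n (2 * n - 1))) :
    ∀ d ∈ P.support, ∃ k₀, n ≤ k₀ ∧ k₀ ≤ 2*n-1 ∧ d k₀ = 1 ∧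
      ∀ k, k ≠ k₀ → n - 1 ≤ k → d k = 0 := by
  intro d hd
  have hmem' : ∀ m ∈ P.support, ∃ i ∈ Set.Icc n (2*n-1), (m : ℕ →₀ ℕ) i ≠ 0 := by
    rw [← mem_ideal_span_X_image]
    exact hmem
  obtain ⟨k₀, ⟨hk₀1, hk₀2⟩, hdk₀⟩ := hmem' d hd
  have hw : (Finsupp.weight (fun i => i + 1) d : ℕ) ≤ 2 * n :=
    le_trans (le_weightedTotalDegree _ hd) hdeg
  have hwa : (Finsupp.weight (fun i => i + 1) d : ℕ) =
      ∑ k ∈ d.support, d k * (k + 1) := by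
    rw [Finsupp.weight_apply, Finsupp.sum]
    simp [smul_eq_mul]
  have hone : ∀ k, d k * (k + 1) ≤ 2 * n := by
    intro k
    by_cases h : d k = 0
    · simp [h]
    · have hk : k ∈ d.support := Finsupp.mem_support_iff.mpr h
      exact le_trans (le_trans (Finset.single_le_sum
        (f := fun j => d j * (j + 1)) (fun j _ => Nat.zero_le _) hk) (le_of_eq hwa.symm)) hw
  have htwo : ∀ k k', k ≠ k' → d k * (k+1) + d k' * (k'+1) ≤ 2 * n := by
    intro k k' hne
    by_cases h : d k = 0
    · simpa [h] using hone k'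
    by_cases h' : d k' = 0
    · simpa [h'] using hone k
    have hk : k ∈ d.support := Finsupp.mem_support_iff.mpr h
    have hk' : k' ∈ d.support := Finsupp.mem_support_iff.mpr h'
    have hsub : ({k, k'} : Finset ℕ) ⊆ d.support := by
      intro x hx
      simp only [Finset.mem_insert, Finset.mem_singleton] at hx
      rcases hx with h | h <;> simp [h, hk, hk']
    have hle := Finset.sum_le_sum_of_subset (f := fun j => d j * (j+1)) hsub
    rw [Finset.sum_pair hne] at hle
    exact le_trans hle (le_trans (le_of_eq hwa.symm) hw)
  refine ⟨k₀, hk₀1, hk₀2, ?_, ?_⟩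
  · have h1 := hone k₀
    by_contra hne1
    have h2 : 2 ≤ d k₀ := by omega
    have h3 : 2 * (k₀ + 1) ≤ d k₀ * (k₀ + 1) := Nat.mul_le_mul_right _ h2
    omega
  · intro k hk hnk
    by_contra hdk
    have h2 := htwo k k₀ hk
    have h3 : 1 * (k + 1) ≤ d k * (k + 1) := Nat.mul_le_mul_right _ (by omega)
    have h4 : 1 * (k₀ + 1) ≤ d k₀ * (k₀ + 1) := Nat.mul_le_mul_right _ (by omega)
    omega
lemma algHom_monomial (f : MvPolynomial ℕ ℤ →ₐ[ℤ] MvPolynomial ℕ ℤ) (e : ℕ →₀ ℕ) (c : ℤ) :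
    f (monomial e c) = C c * e.prod fun k t => (f (X k))^t := by
  rw [monomial_eq, map_mul, map_finsuppProd]
  simp only [map_pow]
  congr 1
  rw [← MvPolynomial.algebraMap_eq, AlgHom.commutes, MvPolynomial.algebraMap_eq]

lemma key (n : ℕ) (hn : 1 ≤ n) (P : MvPolynomial ℕ ℤ)
    (hdeg : P.weightedTotalDegree (fun i => i + 1) ≤ 2 * n)
    (hmem : P ∈ Ideal.span ((fun k => (MvPolynomial.X k : MvPolynomial ℕ ℤ)) ''
        Set.Icc n (2 * n - 1)))
    (heq : phi P = P) : P = 0 := by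
  classical
  by_contra hP
  have hstruct := struct n hn P hdeg hmem
  set T : Finset ℕ := (Finset.Icc n (2*n-1)).filter (fun k => ∃ d ∈ P.support, d k ≠ 0) with hT
  have hTne : T.Nonempty := by
    obtain ⟨d, hd⟩ := Finset.nonempty_iff_ne_empty.mpr
      (fun h => hP (MvPolynomial.support_eq_empty.mp h))
    obtain ⟨k₀, h1, h2, h3, _⟩ := hstruct d hd
    refine ⟨k₀, ?_⟩
    rw [hT, Finset.mem_filter, Finset.mem_Icc]
    exact ⟨⟨h1, h2⟩, d, hd, by omega⟩
  set m := T.min' hTne with hmdef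
  have hmT : m ∈ T := T.min'_mem hTne
  rw [hT, Finset.mem_filter, Finset.mem_Icc] at hmT
  obtain ⟨⟨hmn, hm2n⟩, d₀, hd₀, hd₀m⟩ := hmT
  have hmin : ∀ k, n ≤ k → k < m → ∀ d ∈ P.support, d k = 0 := by
    intro k h1 h2 d hd
    by_contra hne
    have hkT : k ∈ T := by
      rw [hT, Finset.mem_filter, Finset.mem_Icc]
      exact ⟨⟨h1, by omega⟩, d, hd, hne⟩
    have := T.min'_le k hkT
    omega
  -- the evaluation map
  set g : ℕ → MvPolynomial ℕ ℤ :=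
    fun k => if k = m - 1 then X (m-1) else if n - 1 ≤ k then 0 else X k with hgdef
  have hgeq : ∀ k, g k = if k = m - 1 then X (m-1) else if n - 1 ≤ k then 0 else X k :=
    fun k => rfl
  have phiX : ∀ k : ℕ, k ≠ 0 → phi (X k) = X (k-1) + X k := by
    intro k hk
    rw [show phi (X k) = aeval _ (X k) from rfl, aeval_X]
    exact if_neg hk
  have phiX0 : phi (X 0) = 1 + X 0 := by
    rw [show phi (X 0) = aeval _ (X 0) from rfl, aeval_X]
    exact if_pos rfl
  -- values of aeval g ∘ phi on generators
  have hmval : aeval g (phi (X m)) = X (m-1) := by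
    rw [phiX m (by omega), map_add, aeval_X, aeval_X, hgeq, hgeq,
      if_pos rfl, if_neg (by omega), if_pos (by omega), add_zero]
  have hgt : ∀ k, m < k → aeval g (phi (X k)) = 0 := by
    intro k hk
    rw [phiX k (by omega), map_add, aeval_X, aeval_X, hgeq, hgeq,
      if_neg (by omega), if_pos (by omega), if_neg (by omega), if_pos (by omega), add_zero]
  have hsmall : ∀ k, k + 2 ≤ n → aeval g (phi (X k)) = phi (X k) := by
    intro k hk
    rcases Nat.eq_zero_or_pos k with h0 | h0
    · subst h0
      rw [phiX0, map_add, map_one, aeval_X, hgeq, if_neg (by omega), if_neg (by omega)]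
    · rw [phiX k (by omega), map_add, aeval_X, aeval_X, hgeq, hgeq,
        if_neg (by omega), if_neg (by omega), if_neg (by omega), if_neg (by omega)]
  have hcomp : (aeval g).comp phi = aeval (fun k => aeval g (phi (X k))) := by
    apply algHom_ext
    intro k
    simp
  have hcomp' : ∀ p, aeval g (phi p) = aeval (fun k => aeval g (phi (X k))) p := by
    intro p
    rw [show aeval g (phi p) = ((aeval g).comp phi) p from rfl, hcomp]
  -- Claim A : aeval g P = 0
  have hA : aeval g P = 0 := by
    conv_lhs => rw [← support_sum_monomial_coeff P]
    rw [map_sum]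
    apply Finset.sum_eq_zero
    intro d hd
    obtain ⟨k₀, h1, h2, h3, h4⟩ := hstruct d hd
    have hk₀m : m ≤ k₀ := by
      by_contra h
      have := hmin k₀ h1 (by omega) d hd
      omega
    rw [aeval_monomial, Finsupp.prod,
      Finset.prod_eq_zero (Finsupp.mem_support_iff.mpr (show d k₀ ≠ 0 by omega)), mul_zero]
    rw [hgeq, if_neg (by omega), if_pos (by omega), h3, pow_one]
  -- the zero terms of the main sum
  have hzero : ∀ d ∈ P.support, d m = 0 →
      aeval g (phi (monomial d (coeff d P))) = 0 := by
    intro d hd hdm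
    obtain ⟨k₀, h1, h2, h3, h4⟩ := hstruct d hd
    have hk₀m : m ≤ k₀ := by
      by_contra h
      have := hmin k₀ h1 (by omega) d hd
      omega
    have hk₀m' : m < k₀ := by
      rcases Nat.lt_or_ge m k₀ with h | h
      · exact h
      · exfalso; have : k₀ = m := by omega
        rw [this] at h3; omega
    rw [hcomp', algHom_monomial, Finsupp.prod,
      Finset.prod_eq_zero (Finsupp.mem_support_iff.mpr (show d k₀ ≠ 0 by omega)), mul_zero]
    rw [aeval_X, hgt k₀ hk₀m', h3, pow_one]
  -- the main terms
  set S : Finset (ℕ →₀ ℕ) := P.support.filter (fun d => d m ≠ 0) with hS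
  set Q : MvPolynomial ℕ ℤ :=
    ∑ d ∈ S, monomial (Finsupp.erase m d) (coeff d P) with hQ
  have hdm1 : ∀ d ∈ S, d m = 1 := by
    intro d hdS
    rw [hS, Finset.mem_filter] at hdS
    obtain ⟨hd, hdm⟩ := hdS
    obtain ⟨k₀, h1, h2, h3, h4⟩ := hstruct d hd
    have hk₀ : k₀ = m := by
      by_contra hne
      exact hdm (h4 m (fun h => hne h.symm) (by omega))
    rw [← hk₀]; exact h3
  have hterm : ∀ d ∈ S, aeval g (phi (monomial d (coeff d P))) =
      X (m-1) * phi (monomial (Finsupp.erase m d) (coeff d P)) := by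
    intro d hdS
    have hdm : d m = 1 := hdm1 d hdS
    rw [hS, Finset.mem_filter] at hdS
    obtain ⟨hd, _⟩ := hdS
    obtain ⟨k₀, h1, h2, h3, h4⟩ := hstruct d hd
    have hmsup : m ∈ d.support := Finsupp.mem_support_iff.mpr (by omega)
    rw [hcomp', algHom_monomial, ← Finsupp.mul_prod_erase d m _ hmsup]
    rw [aeval_X, hmval, hdm, pow_one]
    rw [algHom_monomial]
    have hprod : ((Finsupp.erase m d).prod fun k t => (aeval g (phi (X k)))^t) =
        (Finsupp.erase m d).prod fun k t => (phi (X k))^t := by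
      apply Finsupp.prod_congr
      intro k hk
      rw [Finsupp.support_erase, Finset.mem_erase] at hk
      obtain ⟨hkm, hksup⟩ := hk
      have hdk : d k ≠ 0 := Finsupp.mem_support_iff.mp hksup
      have hk₀' : k₀ = m := by
        by_contra hne
        have := h4 m (fun h => hne h.symm) (by omega)
        omega
      have hkn : k + 2 ≤ n := by
        by_contra hle
        have := h4 k (by rw [hk₀']; exact hkm) (by omega)
        omega
      rw [hsmall k hkn]
    simp only [aeval_X]
    rw [hprod]
    ring
  have hB : aeval g (phi P) = X (m-1) * phi Q := by
    conv_lhs => rw [← support_sum_monomial_coeff P]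
    rw [map_sum, map_sum]
    rw [← Finset.sum_filter_of_ne (p := fun d => d m ≠ 0)
      (fun d hd hne => by
        intro hdm0
        exact hne (hzero d hd (by simpa using hdm0)))]
    rw [← hS]
    rw [Finset.sum_congr rfl hterm, hQ, map_sum, Finset.mul_sum]
  have h0 : X (m-1) * phi Q = 0 := by rw [← hB, heq, hA]
  have hQ0 : Q = 0 := by
    have := (mul_eq_zero.mp h0).resolve_left (X_ne_zero (m-1))
    apply phi_inj
    rw [this, map_zero]
  have hd₀S : d₀ ∈ S := by rw [hS, Finset.mem_filter]; exact ⟨hd₀, hd₀m⟩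
  have hcoeffQ : coeff (Finsupp.erase m d₀) Q = coeff d₀ P := by
    rw [hQ, coeff_sum]
    rw [Finset.sum_eq_single_of_mem d₀ hd₀S]
    · rw [coeff_monomial, if_pos rfl]
    · intro d hdS hne
      rw [coeff_monomial, if_neg]
      intro hEq
      apply hne
      have hd1 : d m = 1 := hdm1 d hdS
      have hd₀1 : d₀ m = 1 := hdm1 d₀ hd₀S
      have : Finsupp.single m (d m) + Finsupp.erase m d
          = Finsupp.single m (d₀ m) + Finsupp.erase m d₀ := by
        rw [hd1, hd₀1, hEq]
      rwa [Finsupp.single_add_erase, Finsupp.single_add_erase] at this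
  rw [hQ0] at hcoeffQ
  simp only [coeff_zero] at hcoeffQ
  exact (MvPolynomial.mem_support_iff.mp hd₀) hcoeffQ.symm

lemma sub_wtd (p q : MvPolynomial ℕ ℤ) (n : ℕ)
    (hp : p.weightedTotalDegree (fun i => i + 1) ≤ 2 * n)
    (hq : q.weightedTotalDegree (fun i => i + 1) ≤ 2 * n) :
    (p - q).weightedTotalDegree (fun i => i + 1) ≤ 2 * n := by
  classical
  rw [weightedTotalDegree]
  apply Finset.sup_le
  intro d hd
  have hd' := MvPolynomial.support_sub ℕ p q hd
  rw [Finset.mem_union] at hd'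
  rcases hd' with h | h
  · exact le_trans (le_weightedTotalDegree _ h) hp
  · exact le_trans (le_weightedTotalDegree _ h) hq

/-- The functional equation has at most one solution subject to the degree and
ideal-membership constraints. -/
theorem stmt11 (U₁ U₂ : PowerSeries (MvPolynomial ℕ ℤ))
    (h₁ : GoodSolution U₁) (h₂ : GoodSolution U₂) : U₁ = U₂ := by
  obtain ⟨h₁0, h₁n, h₁e⟩ := h₁
  obtain ⟨h₂0, h₂n, h₂e⟩ := h₂
  set D := U₁ - U₂ with hD
  have hfe : (1 - PowerSeries.C (MvPolynomial.X 0) * PowerSeries.X) * D =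
      PowerSeries.map phi.toRingHom D := by
    rw [hD, mul_sub, h₁e, h₂e, ← map_sub]
    rfl
  have hc : ∀ n : ℕ, PowerSeries.coeff n D = 0 := by
    intro n
    induction n with
    | zero =>
      rw [hD, map_sub, h₁0, h₂0, sub_self]
    | succ n ih =>
      have hcoeff := congrArg (PowerSeries.coeff (n+1)) hfe
      rw [PowerSeries.coeff_map, sub_mul, one_mul, map_sub, mul_assoc,
        PowerSeries.coeff_C_mul, PowerSeries.coeff_succ_X_mul, ih, mul_zero, sub_zero] at hcoeff
      have hdeg : (PowerSeries.coeff (n+1) D).weightedTotalDegree (fun i => i + 1)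
          ≤ 2 * (n+1) := by
        rw [hD, map_sub]
        exact sub_wtd _ _ _ ((h₁n (n+1) (by omega)).1) ((h₂n (n+1) (by omega)).1)
      have hmem : PowerSeries.coeff (n+1) D ∈
          Ideal.span ((fun k => (MvPolynomial.X k : MvPolynomial ℕ ℤ)) ''
            Set.Icc (n+1) (2 * (n+1) - 1)) := by
        rw [hD, map_sub]
        exact sub_mem ((h₁n (n+1) (by omega)).2) ((h₂n (n+1) (by omega)).2)
      exact key (n+1) (by omega) _ hdeg hmem hcoeff.symm
  have : D = 0 := PowerSeries.ext hc
  rw [hD] at this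
  exact sub_eq_zero.mp this
end

section
/- The Möbius function value of a single hyperedge K_n on n ≥ 2 labelled vertices, in the poset of hyperforests on n vertices ordered by hyperedge inclusion (with minimal element the hypergraph with no hyperedges), equals -(n-2)!. -/
set_option linter.unusedSectionVars false
set_option maxHeartbeats 1000000

/-- A hyperforest on the vertex set `V`: a hypergraph whose hyperedges (of size at
least `2`) pairwise intersect in at most one vertex, and in which every cycle
(a cyclic sequence of at least three distinct consecutively adjacent vertices)
is contained in a single hyperedge. -/
structure Hyperforest (V : Type*) [DecidableEq V] where
  edges : Finset (Finset V)
  two_le : ∀ e ∈ edges, 2 ≤ e.card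
  inter : ∀ e ∈ edges, ∀ f ∈ edges, e ≠ f → (e ∩ f).card ≤ 1
  cycles : ∀ (k : ℕ) (v : Fin (k + 3) → V), Function.Injective v →
    (∀ j : Fin (k + 3), ∃ e ∈ edges, v j ∈ e ∧ v (j + 1) ∈ e) →
    ∃ e ∈ edges, ∀ j, v j ∈ e

/-- The order on hyperforests: `F' ≤ F` iff every hyperedge of `F'` is contained
in some hyperedge of `F`. -/
def HFle {V : Type*} [DecidableEq V] (F' F : Hyperforest V) : Prop :=
  ∀ e' ∈ F'.edges, ∃ e ∈ F.edges, e' ⊆ e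

namespace HFAux

open Finset
open scoped Classical
open Fin.NatCast
open Fin.CommRing

variable {V : Type*} [DecidableEq V] [Fintype V]

lemma hf_ext {F F' : Hyperforest V} (h : F.edges = F'.edges) : F = F' := by
  cases F; cases F'; simpa using h

noncomputable instance : Fintype (Hyperforest V) :=
  Fintype.ofInjective Hyperforest.edges (fun _ _ h => hf_ext h)

/-- Two edges sharing two distinct vertices are equal. -/
lemma edge_eq (F : Hyperforest V) {e f : Finset V} (he : e ∈ F.edges) (hf : f ∈ F.edges)
    {x y : V} (hxy : x ≠ y) (hxe : x ∈ e) (hye : y ∈ e) (hxf : x ∈ f) (hyf : y ∈ f) :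
    e = f := by
  by_contra hne
  have hsub : ({x, y} : Finset V) ⊆ e ∩ f := by
    intro z hz
    rcases Finset.mem_insert.mp hz with rfl | hz
    · exact Finset.mem_inter.mpr ⟨hxe, hxf⟩
    · rcases Finset.mem_singleton.mp hz with rfl
      exact Finset.mem_inter.mpr ⟨hye, hyf⟩
  have h2 : 2 ≤ (e ∩ f).card := by
    calc 2 = ({x, y} : Finset V).card := (Finset.card_pair hxy).symm
    _ ≤ _ := Finset.card_le_card hsub
  have := F.inter e he f hf hne
  omega


lemma two_le_inter_card {a b : Finset V} {x y : V} (hxy : x ≠ y)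
    (hxa : x ∈ a) (hya : y ∈ a) (hxb : x ∈ b) (hyb : y ∈ b) : 2 ≤ (a ∩ b).card := by
  have hsub : ({x, y} : Finset V) ⊆ a ∩ b := by
    intro z hz
    rcases Finset.mem_insert.mp hz with rfl | hz
    · exact Finset.mem_inter.mpr ⟨hxa, hxb⟩
    · rcases Finset.mem_singleton.mp hz with rfl
      exact Finset.mem_inter.mpr ⟨hya, hyb⟩
  calc 2 = ({x, y} : Finset V).card := (Finset.card_pair hxy).symm
  _ ≤ _ := Finset.card_le_card hsub

lemma fin_natCast_ne_zero {k i : ℕ} (h1 : 1 ≤ i) (h2 : i ≤ k + 2) :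
    ((i : ℕ) : Fin (k+3)) ≠ 0 := by
  rw [Ne, Fin.natCast_eq_zero]
  intro hdvd
  have := Nat.le_of_dvd (by omega) hdvd
  omega

lemma fin_one_ne_zero' {k : ℕ} : (1 : Fin (k+3)) ≠ 0 := by
  have : ((1 : ℕ) : Fin (k+3)) ≠ 0 := fin_natCast_ne_zero le_rfl (by omega)
  simpa using this

lemma fin_succ_ne {k : ℕ} (j : Fin (k+3)) : j + 1 ≠ j := by
  intro h
  have h1 : j + 1 = j + 0 := by rw [add_zero]; exact h
  exact fin_one_ne_zero' (add_left_cancel h1)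

lemma fin_val_add_one {k : ℕ} (j : Fin (k+3)) :
    (j+1).val = if j.val = k + 2 then 0 else j.val + 1 := by
  have h1 : (1 : Fin (k+3)).val = 1 := rfl
  have h := Fin.val_add j 1
  rw [h1] at h
  rw [h]
  have := j.isLt
  by_cases hc : j.val = k + 2
  · rw [if_pos hc, hc]
    exact Nat.mod_self _
  · rw [if_neg hc]; rw [Nat.mod_eq_of_lt (by omega)]

lemma cyc_succ_ne {k : ℕ} {c : Fin (k+3) → V} (hc : Function.Injective c) (j : Fin (k+3)) :
    c j ≠ c (j + 1) := fun h => fin_succ_ne j (hc h.symm)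

/-- Any subcollection of the edges of a hyperforest is a hyperforest. -/
def hfsub (F : Hyperforest V) (p : Finset V → Prop) [DecidablePred p] :
    Hyperforest V where
  edges := F.edges.filter p
  two_le := fun e he => F.two_le e (Finset.mem_filter.mp he).1
  inter := fun e he f hf h =>
    F.inter e (Finset.mem_filter.mp he).1 f (Finset.mem_filter.mp hf).1 h
  cycles := by
    intro k c hc hadj
    obtain ⟨e, he, hall⟩ := F.cycles k c hc (fun j => by
      obtain ⟨x, hx, h1, h2⟩ := hadj j
      exact ⟨x, (Finset.mem_filter.mp hx).1, h1, h2⟩)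
    obtain ⟨x, hx, h1, h2⟩ := hadj 0
    have h01 : c 0 ≠ c (0 + 1) := by
      intro h
      have h10 : (0 + 1 : Fin (k+3)) = 0 := hc h |>.symm
      have : ((0 + 1 : Fin (k+3)) : ℕ) = 1 := by
        simp
      rw [h10] at this
      simp at this
    have hxe : x = e := edge_eq F (Finset.mem_filter.mp hx).1 he h01 h1 h2 (hall 0) (hall (0+1))
    exact ⟨x, hx, fun j => hxe ▸ hall j⟩

lemma hfsub_edges (F : Hyperforest V) (p : Finset V → Prop) [DecidablePred p] :
    (hfsub F p).edges = F.edges.filter p := rfl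

/-- Build a hyperforest from an edge set, if one exists. -/
noncomputable def mkHF (E : Finset (Finset V)) (fb : Hyperforest V) : Hyperforest V :=
  if h : ∃ F : Hyperforest V, F.edges = E then h.choose else fb

lemma mkHF_edges {E : Finset (Finset V)} (fb : Hyperforest V)
    (h : ∃ F : Hyperforest V, F.edges = E) : (mkHF E fb).edges = E := by
  rw [mkHF, dif_pos h]; exact h.choose_spec

/-- weight of a hyperforest -/
noncomputable def hfw (F : Hyperforest V) : ℤ :=
  ∏ e ∈ F.edges, -(((e.card - 2).factorial : ℕ) : ℤ)

def onSet (F : Hyperforest V) (t : Finset V) : Prop := ∀ e ∈ F.edges, e ⊆ t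

noncomputable def hfsum (t : Finset V) : ℤ :=
  ∑ G ∈ univ.filter (fun G : Hyperforest V => onSet G t), hfw G

/-- adjacency graph of a hyperforest -/
def hgraph (F : Hyperforest V) : SimpleGraph V where
  Adj x y := x ≠ y ∧ ∃ e ∈ F.edges, x ∈ e ∧ y ∈ e
  symm := ⟨by
    rintro x y ⟨h, e, he, hx, hy⟩
    exact ⟨h.symm, e, he, hy, hx⟩⟩
  loopless := ⟨fun x h => h.1 rfl⟩

/- ### partitions -/

def pdisj (D : Finset (Finset V)) : Prop :=
  ∀ S ∈ D, ∀ T ∈ D, S ≠ T → Disjoint S T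

noncomputable def pparts (U : Finset V) : Finset (Finset (Finset V)) :=
  univ.filter (fun D => (∀ S ∈ D, S.Nonempty) ∧ pdisj D ∧ D.sup id = U)

noncomputable def pw (S : Finset V) : ℤ := -(((S.card - 1).factorial : ℕ) : ℤ)

noncomputable def pprod (D : Finset (Finset V)) : ℤ := ∏ S ∈ D, pw S

def pval (m : ℕ) : ℤ := if m = 0 then 1 else if m = 1 then -1 else 0

lemma pparts_empty : pparts (∅ : Finset V) = {∅} := by
  ext D
  simp only [pparts, mem_filter, mem_univ, true_and, mem_singleton]
  constructor
  · rintro ⟨h1, h2, h3⟩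
    rw [Finset.eq_empty_iff_forall_notMem]
    intro S hS
    obtain ⟨x, hx⟩ := h1 S hS
    have hmem : x ∈ D.sup id := Finset.mem_sup.mpr ⟨S, hS, hx⟩
    rw [h3] at hmem
    simp at hmem
  · rintro rfl
    refine ⟨by simp, ?_, by simp⟩
    intro S hS
    simp at hS

theorem partition_identity (U : Finset V) :
    ∑ D ∈ pparts U, pprod D = pval U.card := by
  have key : ∀ m : ℕ, ∀ U : Finset V, U.card ≤ m →
      ∑ D ∈ pparts U, pprod D = pval U.card := by
    intro m
    induction m with
    | zero =>
      intro U hU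
      have hU0 : U = ∅ := Finset.card_eq_zero.mp (by omega)
      subst hU0
      rw [pparts_empty, Finset.sum_singleton, pprod, Finset.prod_empty, Finset.card_empty, pval]
      simp
    | succ m ih =>
      intro U hU
      rcases Nat.eq_zero_or_pos U.card with h0 | hpos
      · have hU0 : U = ∅ := Finset.card_eq_zero.mp h0
        subst hU0
        rw [pparts_empty, Finset.sum_singleton, pprod, Finset.prod_empty, Finset.card_empty, pval]
        simp
      obtain ⟨u, hu⟩ := Finset.card_pos.mp hpos
      set pick : Finset (Finset V) → Finset V :=
        fun D => (D.filter (fun S => u ∈ S)).sup id with hpickdef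
      have hpick_spec : ∀ D ∈ pparts U, pick D ∈ D ∧ u ∈ pick D := by
        intro D hD
        simp only [pparts, mem_filter, mem_univ, true_and] at hD
        obtain ⟨h1, h2, h3⟩ := hD
        have humem : u ∈ D.sup id := h3 ▸ hu
        rw [Finset.mem_sup] at humem
        obtain ⟨B, hB, huB⟩ := humem
        have hfil : D.filter (fun S => u ∈ S) = {B} := by
          ext S
          simp only [mem_filter, mem_singleton]
          constructor
          · rintro ⟨hS, huS⟩
            by_contra hne
            exact Finset.disjoint_left.mp (h2 S hS B hB hne) huS huB
          · rintro rfl; exact ⟨hB, huB⟩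
        have : pick D = B := by
          rw [hpickdef]
          simp only [hfil, Finset.sup_singleton, id]
        rw [this]
        exact ⟨hB, huB⟩
      have hmaps : ∀ D ∈ pparts U, pick D ∈ U.powerset.filter (fun B => u ∈ B) := by
        intro D hD
        obtain ⟨hBD, huB⟩ := hpick_spec D hD
        simp only [mem_filter, Finset.mem_powerset] at *
        refine ⟨?_, huB⟩
        intro z hz
        simp only [pparts, mem_filter, mem_univ, true_and] at hD
        have : z ∈ D.sup id := Finset.mem_sup.mpr ⟨_, hBD, hz⟩
        rwa [hD.2.2] at this
      rw [← Finset.sum_fiberwise_of_maps_to hmaps pprod]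
      have hfiber : ∀ B ∈ U.powerset.filter (fun B => u ∈ B),
          ∑ D ∈ (pparts U).filter (fun D => pick D = B), pprod D
            = pw B * pval (U.card - B.card) := by
        intro B hB
        simp only [mem_filter, Finset.mem_powerset] at hB
        obtain ⟨hBU, huB⟩ := hB
        have hBne : B.Nonempty := ⟨u, huB⟩
        have hBpos : 1 ≤ B.card := Finset.card_pos.mpr hBne
        have hcard : (U \ B).card = U.card - B.card := Finset.card_sdiff_of_subset hBU
        have hBcard : B.card ≤ U.card := Finset.card_le_card hBU
        have hIH := ih (U \ B) (by omega)
        have hbij : ∑ D ∈ (pparts U).filter (fun D => pick D = B), pprod D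
            = ∑ D' ∈ pparts (U \ B), pw B * pprod D' := by
          apply Finset.sum_nbij' (i := fun D => D.erase B) (j := fun D' => insert B D')
          · intro D hD
            rw [mem_filter] at hD
            obtain ⟨hDp, hpickD⟩ := hD
            have hspec := hpick_spec D hDp
            rw [hpickD] at hspec
            simp only [pparts, mem_filter, mem_univ, true_and] at hDp ⊢
            obtain ⟨h1, h2, h3⟩ := hDp
            refine ⟨fun S hS => h1 S (Finset.mem_of_mem_erase hS),
              fun S hS T hT hST =>
                h2 S (Finset.mem_of_mem_erase hS) T (Finset.mem_of_mem_erase hT) hST, ?_⟩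
            apply Finset.Subset.antisymm
            · intro z hz
              rw [Finset.mem_sup] at hz
              obtain ⟨S, hS, hzS⟩ := hz
              have hSD := Finset.mem_of_mem_erase hS
              have hSB : S ≠ B := Finset.ne_of_mem_erase hS
              rw [Finset.mem_sdiff]
              constructor
              · rw [← h3]; exact Finset.mem_sup.mpr ⟨S, hSD, hzS⟩
              · intro hzB
                exact Finset.disjoint_left.mp (h2 S hSD B hspec.1 hSB) hzS hzB
            · intro z hz
              rw [Finset.mem_sdiff] at hz
              have hzU : z ∈ D.sup id := h3 ▸ hz.1
              rw [Finset.mem_sup] at hzU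
              obtain ⟨S, hS, hzS⟩ := hzU
              have hSB : S ≠ B := by rintro rfl; exact hz.2 hzS
              exact Finset.mem_sup.mpr ⟨S, Finset.mem_erase.mpr ⟨hSB, hS⟩, hzS⟩
          · intro D' hD'
            simp only [pparts, mem_filter, mem_univ, true_and] at hD'
            obtain ⟨h1, h2, h3⟩ := hD'
            have hdisjB : ∀ S ∈ D', Disjoint B S := by
              intro S hS
              rw [Finset.disjoint_left]
              intro a haB haS
              have : a ∈ D'.sup id := Finset.mem_sup.mpr ⟨S, hS, haS⟩
              rw [h3, Finset.mem_sdiff] at this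
              exact this.2 haB
            rw [mem_filter]
            constructor
            · simp only [pparts, mem_filter, mem_univ, true_and]
              refine ⟨?_, ?_, ?_⟩
              · intro S hS
                rcases Finset.mem_insert.mp hS with rfl | hS
                · exact hBne
                · exact h1 S hS
              · intro S hS T hT hST
                rcases Finset.mem_insert.mp hS with hSB | hS
                · rcases Finset.mem_insert.mp hT with hTB | hT
                  · exact absurd (hSB.trans hTB.symm) hST
                  · exact hSB ▸ hdisjB T hT
                · rcases Finset.mem_insert.mp hT with hTB | hT
                  · exact hTB ▸ (hdisjB S hS).symm
                  · exact h2 S hS T hT hST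
              · rw [Finset.sup_insert, h3]
                show B ⊔ (U \ B) = U
                rw [Finset.sup_eq_union]
                exact Finset.union_sdiff_of_subset hBU
            · have hfil : (insert B D').filter (fun S => u ∈ S) = {B} := by
                ext S
                simp only [mem_filter, mem_singleton, Finset.mem_insert]
                constructor
                · rintro ⟨rfl | hS, huS⟩
                  · rfl
                  · exfalso
                    have : u ∈ D'.sup id := Finset.mem_sup.mpr ⟨S, hS, huS⟩
                    rw [h3, Finset.mem_sdiff] at this
                    exact this.2 huB
                · rintro rfl; exact ⟨Or.inl rfl, huB⟩
              show ((insert B D').filter (fun S => u ∈ S)).sup id = B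
              rw [hfil, Finset.sup_singleton]
              rfl
          · intro D hD
            rw [mem_filter] at hD
            have hspec := hpick_spec D hD.1
            rw [hD.2] at hspec
            exact Finset.insert_erase hspec.1
          · intro D' hD'
            apply Finset.erase_insert
            simp only [pparts, mem_filter, mem_univ, true_and] at hD'
            intro hB'
            have : u ∈ D'.sup id := Finset.mem_sup.mpr ⟨B, hB', huB⟩
            rw [hD'.2.2, Finset.mem_sdiff] at this
            exact this.2 huB
          · intro D hD
            rw [mem_filter] at hD
            have hspec := hpick_spec D hD.1
            rw [hD.2] at hspec
            rw [pprod, pprod, ← Finset.mul_prod_erase _ _ hspec.1]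
        rw [hbij, ← Finset.mul_sum, hIH, hcard]
      rw [Finset.sum_congr rfl hfiber]
      have hUmem : U ∈ U.powerset.filter (fun B => u ∈ B) := by
        simp only [mem_filter, Finset.mem_powerset]
        exact ⟨subset_rfl, hu⟩
      rw [← Finset.add_sum_erase _ _ hUmem]
      have hterm : ∀ B ∈ (U.powerset.filter (fun B => u ∈ B)).erase U,
          pw B * pval (U.card - B.card)
            = if B.card + 1 = U.card then (((U.card - 2).factorial : ℕ) : ℤ) else 0 := by
        intro B hB
        rw [Finset.mem_erase, mem_filter, Finset.mem_powerset] at hB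
        obtain ⟨hBneU, hBU, huB⟩ := hB
        have hlt : B.card < U.card :=
          Finset.card_lt_card (Finset.ssubset_iff_subset_ne.mpr ⟨hBU, hBneU⟩)
        by_cases hc : B.card + 1 = U.card
        · rw [if_pos hc]
          have h1 : U.card - B.card = 1 := by omega
          rw [h1]
          have h2 : pval 1 = -1 := by rfl
          rw [h2, pw]
          have h3 : B.card - 1 = U.card - 2 := by omega
          rw [h3]
          ring
        · rw [if_neg hc]
          have hz : pval (U.card - B.card) = 0 := by
            rw [pval, if_neg (by omega), if_neg (by omega)]
          rw [hz, mul_zero]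
      rw [Finset.sum_congr rfl hterm, ← Finset.sum_filter]
      have hcount : ((U.powerset.filter (fun B => u ∈ B)).erase U).filter
            (fun B => B.card + 1 = U.card)
          = (U.erase u).image (fun x => U.erase x) := by
        ext B
        simp only [mem_filter, Finset.mem_erase, Finset.mem_powerset, Finset.mem_image]
        constructor
        · rintro ⟨⟨hBneU, hBU, huB⟩, hcard⟩
          have hsd : (U \ B).card = 1 := by rw [Finset.card_sdiff_of_subset hBU]; omega
          obtain ⟨x, hx⟩ := Finset.card_eq_one.mp hsd
          have hxU : x ∈ U ∧ x ∉ B := by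
            have : x ∈ U \ B := by rw [hx]; simp
            exact Finset.mem_sdiff.mp this
          refine ⟨x, ⟨?_, hxU.1⟩, ?_⟩
          · rintro rfl; exact hxU.2 huB
          · have hBsub : B ⊆ U.erase x := by
              intro b hb
              rw [Finset.mem_erase]
              exact ⟨fun h => hxU.2 (h ▸ hb), hBU hb⟩
            have := Finset.eq_of_subset_of_card_le hBsub
              (by rw [Finset.card_erase_of_mem hxU.1]; omega)
            exact this.symm
        · rintro ⟨x, ⟨hxu, hxU⟩, rfl⟩
          have hcard : (U.erase x).card = U.card - 1 := Finset.card_erase_of_mem hxU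
          refine ⟨⟨?_, Finset.erase_subset _ _,
            Finset.mem_erase.mpr ⟨fun h => hxu h.symm, hu⟩⟩, by omega⟩
          intro hEq
          have : x ∈ U.erase x := hEq.symm ▸ hxU
          exact (Finset.mem_erase.mp this).1 rfl
      rw [hcount, Finset.sum_const, Finset.card_image_of_injOn, Finset.card_erase_of_mem hu]
      · rw [Nat.sub_self]
        have hp0 : pval 0 = 1 := rfl
        rw [hp0, mul_one, pw, nsmul_eq_mul]
        rcases Nat.lt_or_ge U.card 2 with hc2 | hc2
        · have h1 : U.card = 1 := by omega
          rw [h1, pval]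
          norm_num
        · have h1 : U.card - 1 = (U.card - 2) + 1 := by omega
          have h2 : ((U.card - 1).factorial) = (U.card - 1) * (U.card - 2).factorial := by
            rw [h1, Nat.factorial_succ, ← h1]
          rw [h2, pval, if_neg (by omega), if_neg (by omega)]
          push_cast
          ring
      · intro x hx x' hx' hEq
        by_contra hne
        have hx'U : x' ∈ U := Finset.mem_of_mem_erase (Finset.mem_coe.mp hx')
        have hmem : x' ∈ U.erase x :=
          Finset.mem_erase.mpr ⟨fun h => hne h.symm, hx'U⟩
        have hEq' : U.erase x = U.erase x' := hEq
        rw [hEq'] at hmem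
        exact (Finset.mem_erase.mp hmem).1 rfl
  exact key U.card U le_rfl

/- ### validity and the star decomposition -/

def validU (H : Hyperforest V) (t : Finset V) (v : V) (U : Finset V) : Prop :=
  U ⊆ t.erase v ∧ ∀ x ∈ U, ∀ y ∈ U, x ≠ y → ¬ (hgraph H).Reachable x y

def validD (H : Hyperforest V) (t : Finset V) (v : V) (D : Finset (Finset V)) : Prop :=
  (∀ S ∈ D, S.Nonempty) ∧ pdisj D ∧ validU H t v (D.sup id)

theorem exists_glue (H : Hyperforest V) (t : Finset V) (v : V)
    (hH : onSet H (t.erase v)) (D : Finset (Finset V)) (hD : validD H t v D) :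
    ∃ F : Hyperforest V, F.edges = H.edges ∪ D.image (insert v ·) := by
  obtain ⟨hne, hdisj, hUsub, hreach⟩ := hD
  have hvH : ∀ e ∈ H.edges, v ∉ e := fun e he hv' =>
    (Finset.mem_erase.mp (hH e he hv')).1 rfl
  have hvS : ∀ S ∈ D, v ∉ S := by
    intro S hS hv'
    have hmem : v ∈ D.sup id := Finset.mem_sup.mpr ⟨S, hS, hv'⟩
    exact (Finset.mem_erase.mp (hUsub hmem)).1 rfl
  have hSU : ∀ S ∈ D, ∀ x ∈ S, x ∈ D.sup id :=
    fun S hS x hx => Finset.mem_sup.mpr ⟨S, hS, hx⟩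
  refine ⟨⟨H.edges ∪ D.image (insert v ·), ?_, ?_, ?_⟩, rfl⟩
  · intro e he
    rcases Finset.mem_union.mp he with h | h
    · exact H.two_le e h
    · obtain ⟨S, hS, rfl⟩ := Finset.mem_image.mp h
      rw [Finset.card_insert_of_notMem (hvS S hS)]
      have := Finset.card_pos.mpr (hne S hS)
      omega
  · have aux : ∀ e ∈ H.edges, ∀ S ∈ D, (e ∩ insert v S).card ≤ 1 := by
      intro e he S hS
      by_contra hcon
      push_neg at hcon
      obtain ⟨a, ha, b, hb, hab⟩ := Finset.one_lt_card.mp hcon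
      rw [Finset.mem_inter] at ha hb
      have hav : a ≠ v := fun h => hvH e he (h ▸ ha.1)
      have hbv : b ≠ v := fun h => hvH e he (h ▸ hb.1)
      have haS : a ∈ S := (Finset.mem_insert.mp ha.2).resolve_left hav
      have hbS : b ∈ S := (Finset.mem_insert.mp hb.2).resolve_left hbv
      exact hreach a (hSU S hS a haS) b (hSU S hS b hbS) hab
        (SimpleGraph.Adj.reachable ⟨hab, e, he, ha.1, hb.1⟩)
    intro e he f hf hef
    rcases Finset.mem_union.mp he with h1 | h1 <;> rcases Finset.mem_union.mp hf with h2 | h2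
    · exact H.inter e h1 f h2 hef
    · obtain ⟨S, hS, rfl⟩ := Finset.mem_image.mp h2
      exact aux e h1 S hS
    · obtain ⟨S, hS, rfl⟩ := Finset.mem_image.mp h1
      rw [Finset.inter_comm]
      exact aux f h2 S hS
    · obtain ⟨S, hS, rfl⟩ := Finset.mem_image.mp h1
      obtain ⟨T, hT, rfl⟩ := Finset.mem_image.mp h2
      have hST : S ≠ T := fun h => hef (by rw [h])
      have hsub : insert v S ∩ insert v T ⊆ {v} := by
        intro x hx
        rw [Finset.mem_inter] at hx
        rcases Finset.mem_insert.mp hx.1 with rfl | hxS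
        · exact Finset.mem_singleton_self _
        · rcases Finset.mem_insert.mp hx.2 with rfl | hxT
          · exact Finset.mem_singleton_self _
          · exact absurd hxT (Finset.disjoint_left.mp (hdisj S hS T hT hST) hxS)
      calc (insert v S ∩ insert v T).card ≤ ({v} : Finset V).card :=
            Finset.card_le_card hsub
      _ = 1 := Finset.card_singleton v
  · intro k c hinj hadj
    have hON : ∀ j : Fin (k+3), (∃ e ∈ H.edges, c j ∈ e ∧ c (j+1) ∈ e) ∨
        (∃ S ∈ D, c j ∈ insert v S ∧ c (j+1) ∈ insert v S) := by
      intro j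
      obtain ⟨e, he, h1, h2⟩ := hadj j
      rcases Finset.mem_union.mp he with h | h
      · exact Or.inl ⟨e, h, h1, h2⟩
      · obtain ⟨S, hS, rfl⟩ := Finset.mem_image.mp h
        exact Or.inr ⟨S, hS, h1, h2⟩
    by_cases hallold : ∀ j : Fin (k+3), ∃ e ∈ H.edges, c j ∈ e ∧ c (j+1) ∈ e
    · obtain ⟨e, he, hall⟩ := H.cycles k c hinj hallold
      exact ⟨e, Finset.mem_union_left _ he, hall⟩
    obtain ⟨j₁, hj₁⟩ := not_forall.mp hallold
    have hNj₁ : ∃ S ∈ D, c j₁ ∈ insert v S ∧ c (j₁+1) ∈ insert v S :=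
      (hON j₁).resolve_left hj₁
    have holdv : ∀ (j : Fin (k+3)), (∃ e ∈ H.edges, c j ∈ e ∧ c (j+1) ∈ e) →
        c j ≠ v ∧ c (j+1) ≠ v := by
      rintro j ⟨e, he, h1, h2⟩
      exact ⟨fun h => hvH e he (h ▸ h1), fun h => hvH e he (h ▸ h2)⟩
    have C1 : ∀ j : Fin (k+3), (∃ S ∈ D, c j ∈ insert v S ∧ c (j+1) ∈ insert v S) →
        (∃ S ∈ D, c (j+1) ∈ insert v S ∧ c (j+1+1) ∈ insert v S) := by
      intro j hNj
      by_contra hNo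
      have hOld1 : ∃ e ∈ H.edges, c (j+1) ∈ e ∧ c (j+1+1) ∈ e := (hON (j+1)).resolve_right hNo
      have hnev : c (j+1) ≠ v := (holdv (j+1) hOld1).1
      obtain ⟨S, hS, h1, h2⟩ := hNj
      have hcj1U : c (j+1) ∈ D.sup id :=
        hSU S hS _ ((Finset.mem_insert.mp h2).resolve_left hnev)
      have hw : ∃ S' ∈ D, c (j+1+((k+2 : ℕ) : Fin (k+3))) ∈ insert v S' ∧
          c (j+1+((k+2 : ℕ) : Fin (k+3))+1) ∈ insert v S' := by
        have hid : j + 1 + ((k+2 : ℕ) : Fin (k+3)) = j := by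
          have h0 : (1 : Fin (k+3)) + ((k+2 : ℕ) : Fin (k+3)) = 0 := by
            have h1' : (1 : Fin (k+3)) = ((1 : ℕ) : Fin (k+3)) := by norm_cast
            rw [h1', ← Nat.cast_add]
            rw [show 1 + (k+2) = k + 3 from by omega]
            exact Fin.natCast_self (k+3)
          rw [add_assoc, h0, add_zero]
        rw [hid]
        exact ⟨S, hS, h1, h2⟩
      have hex : ∃ i : ℕ, ∃ S' ∈ D, c (j+1+(i : Fin (k+3))) ∈ insert v S' ∧
          c (j+1+(i : Fin (k+3))+1) ∈ insert v S' := ⟨k+2, hw⟩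
      obtain ⟨i₀, hspec, hmin⟩ : ∃ i₀ : ℕ,
          (∃ S' ∈ D, c (j+1+(i₀ : Fin (k+3))) ∈ insert v S' ∧
            c (j+1+(i₀ : Fin (k+3))+1) ∈ insert v S') ∧
          ∀ i < i₀, ¬ (∃ S' ∈ D, c (j+1+(i : Fin (k+3))) ∈ insert v S' ∧
            c (j+1+(i : Fin (k+3))+1) ∈ insert v S') :=
        ⟨Nat.find hex, Nat.find_spec hex, fun i h => Nat.find_min hex h⟩
      have hi₀le : i₀ ≤ k+2 := by
        by_contra h
        exact hmin (k+2) (by omega) hw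
      have hi₀pos : 1 ≤ i₀ := by
        by_contra h
        have h0 : i₀ = 0 := by omega
        rw [h0, Nat.cast_zero, add_zero] at hspec
        exact hNo hspec
      have hOldrun : ∀ i : ℕ, i < i₀ → ∃ e ∈ H.edges, c (j+1+(i : Fin (k+3))) ∈ e ∧
          c (j+1+(i : Fin (k+3))+1) ∈ e := by
        intro i hi
        exact (hON _).resolve_right (hmin i hi)
      have hreachrun : ∀ i : ℕ, i ≤ i₀ →
          (hgraph H).Reachable (c (j+1)) (c (j+1+(i : Fin (k+3)))) := by
        intro i
        induction i with
        | zero =>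
          intro _
          rw [Nat.cast_zero, add_zero]
        | succ i ihr =>
          intro hle
          have hlt : i < i₀ := by omega
          obtain ⟨e, he, ha, hb⟩ := hOldrun i hlt
          have hnecc : c (j+1+(i : Fin (k+3))) ≠ c (j+1+(i : Fin (k+3))+1) :=
            cyc_succ_ne hinj _
          have hadj1 : (hgraph H).Adj (c (j+1+(i : Fin (k+3))))
              (c (j+1+(i : Fin (k+3))+1)) := ⟨hnecc, e, he, ha, hb⟩
          have hcast : ((i+1 : ℕ) : Fin (k+3)) = (i : Fin (k+3)) + 1 := by push_cast; ring
          rw [hcast, ← add_assoc]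
          exact (ihr (by omega)).trans hadj1.reachable
      have hcend_ne : c (j+1+(i₀ : Fin (k+3))) ≠ v := by
        intro hcv
        obtain ⟨e, he, ha, hb⟩ := hOldrun (i₀ - 1) (by omega)
        have hcast : ((i₀ - 1 : ℕ) : Fin (k+3)) + 1 = (i₀ : Fin (k+3)) := by
          have h1' : (i₀ - 1) + 1 = i₀ := by omega
          calc ((i₀ - 1 : ℕ) : Fin (k+3)) + 1
              = (((i₀ - 1) + 1 : ℕ) : Fin (k+3)) := by push_cast; ring
          _ = _ := by rw [h1']
        have hidx : j+1+((i₀ - 1 : ℕ) : Fin (k+3)) + 1 = j+1+(i₀ : Fin (k+3)) := by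
          rw [add_assoc (j+1), hcast]
        rw [hidx] at hb
        exact hvH e he (hcv ▸ hb)
      obtain ⟨S', hS', h1', h2'⟩ := hspec
      have hcendU : c (j+1+(i₀ : Fin (k+3))) ∈ D.sup id :=
        hSU S' hS' _ ((Finset.mem_insert.mp h1').resolve_left hcend_ne)
      have hidxne : j+1+(i₀ : Fin (k+3)) ≠ j+1 := by
        intro h
        have h0 : ((i₀ : ℕ) : Fin (k+3)) = 0 := by
          calc ((i₀ : ℕ) : Fin (k+3)) = (j+1+(i₀ : Fin (k+3))) - (j+1) := by ring
          _ = (j+1) - (j+1) := by rw [h]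
          _ = 0 := by ring
        exact fin_natCast_ne_zero hi₀pos hi₀le h0
      have hccne : c (j+1) ≠ c (j+1+(i₀ : Fin (k+3))) := fun h => hidxne (hinj h.symm)
      exact hreach _ hcj1U _ hcendU hccne (hreachrun i₀ le_rfl)
    have hallnew : ∀ j : Fin (k+3), ∃ S ∈ D, c j ∈ insert v S ∧ c (j+1) ∈ insert v S := by
      have hstep : ∀ i : ℕ, ∃ S ∈ D, c (j₁ + (i : Fin (k+3))) ∈ insert v S ∧
          c (j₁ + (i : Fin (k+3)) + 1) ∈ insert v S := by
        intro i
        induction i with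
        | zero =>
          rw [Nat.cast_zero, add_zero]
          exact hNj₁
        | succ i ihs =>
          have hnext := C1 _ ihs
          have hcast : ((i+1 : ℕ) : Fin (k+3)) = (i : Fin (k+3)) + 1 := by push_cast; ring
          rw [hcast, ← add_assoc]
          exact hnext
      intro j
      have hres := hstep ((j - j₁).val)
      rwa [Fin.cast_val_eq_self, show j₁ + (j - j₁) = j from by ring] at hres
    choose Sf hSfD hSf using hallnew
    have hchain : ∀ j : Fin (k+3), c (j+1) ≠ v → Sf j = Sf (j+1) := by
      intro j hnev
      by_contra hdiff
      have ha : c (j+1) ∈ Sf j := (Finset.mem_insert.mp (hSf j).2).resolve_left hnev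
      have hb : c (j+1) ∈ Sf (j+1) := (Finset.mem_insert.mp (hSf (j+1)).1).resolve_left hnev
      exact Finset.disjoint_left.mp (hdisj _ (hSfD j) _ (hSfD (j+1)) hdiff) ha hb
    have hexu : ∃ j₀ : Fin (k+3), ∀ j, c j = v → j = j₀ := by
      by_cases h : ∃ j₀, c j₀ = v
      · obtain ⟨j₀, h0⟩ := h
        exact ⟨j₀, fun j hj => hinj (hj.trans h0.symm)⟩
      · push_neg at h
        exact ⟨j₁, fun j hj => absurd hj (h j)⟩
    obtain ⟨j₀, hj₀⟩ := hexu
    have hconst : ∀ i : ℕ, i ≤ k+2 → Sf (j₀ + (i : Fin (k+3))) = Sf j₀ := by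
      intro i
      induction i with
      | zero =>
        intro _
        rw [Nat.cast_zero, add_zero]
      | succ i ihs =>
        intro hle
        have hprev : Sf (j₀ + (i : Fin (k+3))) = Sf j₀ := ihs (by omega)
        have hnev : c (j₀ + (i : Fin (k+3)) + 1) ≠ v := by
          intro hcv
          have heq := hj₀ _ hcv
          have h0 : ((i+1 : ℕ) : Fin (k+3)) = 0 := by
            have hc2 : ((i+1 : ℕ) : Fin (k+3)) = (i : Fin (k+3)) + 1 := by push_cast; ring
            rw [hc2]
            calc (i : Fin (k+3)) + 1 = (j₀ + (i : Fin (k+3)) + 1) - j₀ := by ring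
            _ = j₀ - j₀ := by rw [heq]
            _ = 0 := by ring
          exact fin_natCast_ne_zero (by omega) (by omega) h0
        have hch := hchain _ hnev
        have hc2 : ((i+1 : ℕ) : Fin (k+3)) = (i : Fin (k+3)) + 1 := by push_cast; ring
        rw [hc2, ← add_assoc, ← hch]
        exact hprev
    have hSall : ∀ j : Fin (k+3), Sf j = Sf j₀ := by
      intro j
      have hle : (j - j₀).val ≤ k+2 := by omega
      have hres := hconst (j - j₀).val hle
      rwa [Fin.cast_val_eq_self, show j₀ + (j - j₀) = j from by ring] at hres
    refine ⟨insert v (Sf j₀),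
      Finset.mem_union_right _ (Finset.mem_image_of_mem _ (hSfD j₀)), ?_⟩
    intro j
    have h := (hSf (j - 1)).2
    rwa [show (j - 1) + 1 = j from by ring, hSall (j-1)] at h

lemma walk_support_cases {G : SimpleGraph V} {x y : V} (p : G.Walk x y) :
    ∀ u ∈ p.support, u = x ∨ ∃ z, G.Adj z u := by
  induction p with
  | nil => intro u hu; left; simpa using hu
  | cons h q ih =>
    intro u hu
    rw [SimpleGraph.Walk.support_cons] at hu
    rcases List.mem_cons.mp hu with rfl | hu
    · left; rfl
    · rcases ih u hu with rfl | h'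
      · exact Or.inr ⟨_, h⟩
      · exact Or.inr h'

lemma isPath_getVert_inj {G : SimpleGraph V} {x y : V} (p : G.Walk x y) :
    p.IsPath → ∀ i, i ≤ p.length → ∀ j, j ≤ p.length →
      p.getVert i = p.getVert j → i = j := by
  induction p with
  | nil => intro _ i hi j hj _; simp at hi hj; omega
  | cons h q ih =>
    intro hp i hi j hj heq
    rw [SimpleGraph.Walk.cons_isPath_iff] at hp
    rw [SimpleGraph.Walk.length_cons] at hi hj
    match i, j with
    | 0, 0 => rfl
    | 0, (j+1) =>
      exfalso
      rw [SimpleGraph.Walk.getVert_zero, SimpleGraph.Walk.getVert_cons_succ] at heq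
      exact hp.2 (SimpleGraph.Walk.mem_support_iff_exists_getVert.mpr
        ⟨j, heq.symm, by omega⟩)
    | (i+1), 0 =>
      exfalso
      rw [SimpleGraph.Walk.getVert_zero, SimpleGraph.Walk.getVert_cons_succ] at heq
      exact hp.2 (SimpleGraph.Walk.mem_support_iff_exists_getVert.mpr
        ⟨i, heq, by omega⟩)
    | (i+1), (j+1) =>
      rw [SimpleGraph.Walk.getVert_cons_succ, SimpleGraph.Walk.getVert_cons_succ] at heq
      have := ih hp.1 i (by omega) j (by omega) heq
      omega

theorem no_path (G H : Hyperforest V) (hHG : H.edges ⊆ G.edges) (v : V)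
    (hvH : ∀ e ∈ H.edges, v ∉ e) {x y : V} (hxy : x ≠ y) (hvx : v ≠ x) (hvy : v ≠ y)
    (hx : ∃ e ∈ G.edges, v ∈ e ∧ x ∈ e) (hy : ∃ e ∈ G.edges, v ∈ e ∧ y ∈ e)
    (hr : (hgraph H).Reachable x y) : False := by
  obtain ⟨w⟩ := hr
  obtain ⟨p, hp⟩ : ∃ p : (hgraph H).Walk x y, p.IsPath := ⟨w.toPath, w.toPath.2⟩
  have hvsup : v ∉ p.support := by
    intro hv
    rcases walk_support_cases p v hv with h | ⟨z, hz⟩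
    · exact hvx h
    · obtain ⟨hne, e, he, _, hve⟩ := hz
      exact hvH e he hve
  have hL : 1 ≤ p.length := by
    by_contra hcon
    exact hxy (p.eq_of_length_eq_zero (by omega))
  obtain ⟨m, hm⟩ : ∃ m, p.length = m + 1 := ⟨p.length - 1, by omega⟩
  have hy' : p.getVert (m+1) = y := by rw [← hm]; exact p.getVert_length
  set c : Fin (m+3) → V := fun j => if j.val = 0 then v else p.getVert (j.val - 1) with hcdef
  have hc0 : ∀ j : Fin (m+3), j.val = 0 → c j = v := by
    intro j hj; rw [hcdef]; simp only [if_pos hj]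
  have hcpos : ∀ j : Fin (m+3), j.val ≠ 0 → c j = p.getVert (j.val - 1) := by
    intro j hj; rw [hcdef]; simp only [if_neg hj]
  have hinj : Function.Injective c := by
    intro a b hab
    have ha2 := a.isLt
    have hb2 := b.isLt
    by_cases ha : a.val = 0 <;> by_cases hb : b.val = 0
    · exact Fin.val_injective (by omega)
    · exfalso
      rw [hc0 a ha, hcpos b hb] at hab
      exact hvsup (SimpleGraph.Walk.mem_support_iff_exists_getVert.mpr
        ⟨b.val - 1, hab.symm, by omega⟩)
    · exfalso
      rw [hcpos a ha, hc0 b hb] at hab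
      exact hvsup (SimpleGraph.Walk.mem_support_iff_exists_getVert.mpr
        ⟨a.val - 1, hab, by omega⟩)
    · rw [hcpos a ha, hcpos b hb] at hab
      have := isPath_getVert_inj p hp (a.val - 1) (by omega) (b.val - 1) (by omega) hab
      exact Fin.val_injective (by omega)
  have hadjc : ∀ j : Fin (m+3), ∃ e ∈ G.edges, c j ∈ e ∧ c (j+1) ∈ e := by
    intro j
    have hj1 := fin_val_add_one j
    have hjlt := j.isLt
    by_cases hlast : j.val = m + 2
    · rw [if_pos hlast] at hj1
      have hcj : c j = y := by
        rw [hcpos j (by omega), show j.val - 1 = m + 1 by omega]; exact hy'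
      have hcj1 : c (j+1) = v := hc0 _ hj1
      obtain ⟨e, he, hve, hye⟩ := hy
      exact ⟨e, he, by rw [hcj]; exact hye, by rw [hcj1]; exact hve⟩
    · rw [if_neg hlast] at hj1
      by_cases hj0 : j.val = 0
      · have hcj : c j = v := hc0 j hj0
        have hcj1 : c (j+1) = p.getVert 0 := by
          rw [hcpos _ (by omega), hj1, show j.val + 1 - 1 = 0 by omega]
        rw [p.getVert_zero] at hcj1
        obtain ⟨e, he, hve, hxe⟩ := hx
        exact ⟨e, he, by rw [hcj]; exact hve, by rw [hcj1]; exact hxe⟩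
      · have hcj : c j = p.getVert (j.val - 1) := hcpos j hj0
        have hcj1 : c (j+1) = p.getVert j.val := by
          rw [hcpos _ (by omega), hj1, show j.val + 1 - 1 = j.val by omega]
        have hadj' := p.adj_getVert_succ (i := j.val - 1) (by omega)
        rw [show j.val - 1 + 1 = j.val by omega] at hadj'
        obtain ⟨hne, e, he, h1, h2⟩ := hadj'
        exact ⟨e, hHG he, by rw [hcj]; exact h1, by rw [hcj1]; exact h2⟩
  obtain ⟨e, he, hall⟩ := G.cycles m c hinj hadjc
  have hve : v ∈ e := by have := hall 0; rwa [hc0 0 rfl] at this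
  have hone : (1 : Fin (m+3)).val = 1 := rfl
  have hxe : x ∈ e := by
    have := hall 1
    rw [hcpos 1 (by rw [hone]; omega), hone, Nat.sub_self, p.getVert_zero] at this
    exact this
  have hgve : p.getVert 1 ∈ e := by
    have := hall ⟨2, by omega⟩
    rwa [hcpos ⟨2, by omega⟩ (by norm_num)] at this
  have hadj01 := p.adj_getVert_succ (i := 0) (by omega)
  rw [p.getVert_zero] at hadj01
  obtain ⟨hne1, e₁, he₁, hxe₁, hgv₁⟩ := hadj01
  have he₁e : e₁ = e := edge_eq G (hHG he₁) he hne1 hxe₁ hgv₁ hxe hgve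
  exact hvH e₁ he₁ (he₁e ▸ hve)

theorem inner_sum (H : Hyperforest V) (t : Finset V) (v : V) (hv : v ∈ t) :
    ∑ D ∈ univ.filter (fun D : Finset (Finset V) => validD H t v D), pprod D
      = 2 - (t.card : ℤ) := by
  have hmaps : ∀ D ∈ univ.filter (fun D : Finset (Finset V) => validD H t v D),
      D.sup id ∈ univ.filter (fun U => validU H t v U) := by
    intro D hD
    rw [mem_filter] at hD ⊢
    exact ⟨mem_univ _, hD.2.2.2⟩
  rw [← Finset.sum_fiberwise_of_maps_to hmaps pprod]
  have hfib : ∀ U ∈ univ.filter (fun U => validU H t v U),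
      ∑ D ∈ (univ.filter (fun D : Finset (Finset V) => validD H t v D)).filter
        (fun D => D.sup id = U), pprod D = pval U.card := by
    intro U hU
    rw [mem_filter] at hU
    have hset : (univ.filter (fun D : Finset (Finset V) => validD H t v D)).filter
        (fun D => D.sup id = U) = pparts U := by
      ext D
      simp only [mem_filter, mem_univ, true_and, pparts]
      simp only [validD]
      constructor
      · rintro ⟨⟨h1, h2, h3⟩, h4⟩
        exact ⟨h1, h2, h4⟩
      · rintro ⟨h1, h2, h3⟩
        exact ⟨⟨h1, h2, h3 ▸ hU.2⟩, h3⟩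
    rw [hset]
    exact partition_identity U
  rw [Finset.sum_congr rfl hfib]
  have hsplit : ∀ U : Finset V, pval U.card
      = (if U = ∅ then (1:ℤ) else 0) + (if U.card = 1 then -1 else 0) := by
    intro U
    by_cases h0 : U.card = 0
    · have hU : U = ∅ := Finset.card_eq_zero.mp h0
      rw [pval, if_pos h0, if_pos hU, if_neg (by omega)]
      norm_num
    · have hU : ¬ U = ∅ := fun h => h0 (by rw [h]; exact Finset.card_empty)
      by_cases h1 : U.card = 1
      · rw [pval, if_neg h0, if_pos h1, if_neg hU]
        norm_num
      · rw [pval, if_neg h0, if_neg h1, if_neg hU]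
        norm_num
  rw [Finset.sum_congr rfl (fun U _ => hsplit U), Finset.sum_add_distrib]
  have hfirst : ∑ U ∈ univ.filter (fun U => validU H t v U),
      (if U = ∅ then (1:ℤ) else 0) = 1 := by
    have hmem : (∅ : Finset V) ∈ univ.filter (fun U => validU H t v U) := by
      rw [mem_filter]
      exact ⟨mem_univ _, Finset.empty_subset _,
        fun x hx => absurd hx (Finset.notMem_empty x)⟩
    rw [Finset.sum_ite_eq' (univ.filter (fun U => validU H t v U)) ∅ (fun _ => (1:ℤ))]
    rw [if_pos hmem]
  have hsecond : ∑ U ∈ univ.filter (fun U => validU H t v U),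
      (if U.card = 1 then (-1:ℤ) else 0) = -(((t.erase v).card : ℤ)) := by
    rw [← Finset.sum_filter]
    have hcount : (univ.filter (fun U => validU H t v U)).filter (fun U => U.card = 1)
        = (t.erase v).image (fun x => ({x} : Finset V)) := by
      ext U
      simp only [mem_filter, mem_univ, true_and, Finset.mem_image]
      constructor
      · rintro ⟨⟨hsub, _⟩, hcard⟩
        obtain ⟨x, rfl⟩ := Finset.card_eq_one.mp hcard
        exact ⟨x, hsub (Finset.mem_singleton_self x), rfl⟩
      · rintro ⟨x, hx, rfl⟩
        refine ⟨⟨?_, ?_⟩, Finset.card_singleton x⟩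
        · intro z hz
          exact (Finset.mem_singleton.mp hz) ▸ hx
        · intro a ha b hb hab
          rw [Finset.mem_singleton] at ha hb
          exact absurd (ha.trans hb.symm) hab
    rw [hcount, Finset.sum_const,
      Finset.card_image_of_injOn (fun a _ b _ h => Finset.singleton_inj.mp h)]
    rw [nsmul_eq_mul]
    ring
  rw [hfirst, hsecond, Finset.card_erase_of_mem hv]
  have h1 : 1 ≤ t.card := Finset.card_pos.mpr ⟨v, hv⟩
  rw [Nat.cast_sub h1, Nat.cast_one]
  ring

theorem hfsum_rec (t : Finset V) (v : V) (hv : v ∈ t) :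
    hfsum t = (2 - (t.card : ℤ)) * hfsum (t.erase v) := by
  have hbij : hfsum t = ∑ x ∈ (univ ×ˢ univ).filter
      (fun x : Hyperforest V × Finset (Finset V) =>
        onSet x.1 (t.erase v) ∧ validD x.1 t v x.2),
      hfw x.1 * pprod x.2 := by
    rw [hfsum]
    apply Finset.sum_nbij'
      (i := fun G => (hfsub G (fun e => v ∉ e),
        (G.edges.filter (fun e => v ∈ e)).image (fun e => e.erase v)))
      (j := fun x => mkHF (x.1.edges ∪ x.2.image (insert v ·)) x.1)
    · intro G hG
      rw [mem_filter] at hG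
      have hGt : onSet G t := hG.2
      have hHsub : (hfsub G (fun e => v ∉ e)).edges ⊆ G.edges := by
        rw [hfsub_edges]; exact Finset.filter_subset _ _
      have hHv : ∀ e ∈ (hfsub G (fun e => v ∉ e)).edges, v ∉ e := by
        intro e he; rw [hfsub_edges, mem_filter] at he; exact he.2
      have honH : onSet (hfsub G (fun e => v ∉ e)) (t.erase v) := by
        intro e he
        have hem := he
        rw [hfsub_edges, mem_filter] at hem
        intro z hz
        rw [Finset.mem_erase]
        exact ⟨fun h => hem.2 (h ▸ hz), hGt e hem.1 hz⟩
      rw [mem_filter]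
      refine ⟨mem_univ _, honH, ?_, ?_, ?_, ?_⟩
      · intro S hS
        obtain ⟨e, he, rfl⟩ := Finset.mem_image.mp hS
        rw [mem_filter] at he
        rw [← Finset.card_pos, Finset.card_erase_of_mem he.2]
        have := G.two_le e he.1
        omega
      · intro S hS T hT hST
        obtain ⟨e, he, rfl⟩ := Finset.mem_image.mp hS
        obtain ⟨f, hf, rfl⟩ := Finset.mem_image.mp hT
        rw [mem_filter] at he hf
        have hef : e ≠ f := fun h => hST (by rw [h])
        rw [Finset.disjoint_left]
        intro a haS haT
        have hav : a ≠ v := (Finset.mem_erase.mp haS).1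
        have h2c : 2 ≤ (e ∩ f).card := two_le_inter_card hav
          (Finset.mem_of_mem_erase haS) he.2 (Finset.mem_of_mem_erase haT) hf.2
        have := G.inter e he.1 f hf.1 hef
        omega
      · intro z hz
        rw [Finset.mem_sup] at hz
        obtain ⟨S, hS, hzS⟩ := hz
        obtain ⟨e, he, rfl⟩ := Finset.mem_image.mp hS
        rw [mem_filter] at he
        rw [Finset.mem_erase]
        exact ⟨(Finset.mem_erase.mp hzS).1, hGt e he.1 (Finset.mem_of_mem_erase hzS)⟩
      · intro x hx y hy hxy hr
        rw [Finset.mem_sup] at hx hy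
        obtain ⟨S, hS, hxS⟩ := hx
        obtain ⟨e, he, rfl⟩ := Finset.mem_image.mp hS
        rw [mem_filter] at he
        obtain ⟨T, hT, hyT⟩ := hy
        obtain ⟨f, hf, rfl⟩ := Finset.mem_image.mp hT
        rw [mem_filter] at hf
        exact no_path G (hfsub G (fun e => v ∉ e)) hHsub v hHv hxy
          (Ne.symm (Finset.mem_erase.mp hxS).1) (Ne.symm (Finset.mem_erase.mp hyT).1)
          ⟨e, he.1, he.2, Finset.mem_of_mem_erase hxS⟩
          ⟨f, hf.1, hf.2, Finset.mem_of_mem_erase hyT⟩ hr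
    · rintro ⟨H, D⟩ hx
      rw [mem_filter] at hx
      obtain ⟨-, honH, hvD⟩ := hx
      have hex := exists_glue H t v honH D hvD
      rw [mem_filter]
      refine ⟨mem_univ _, ?_⟩
      intro e he
      rw [mkHF_edges _ hex] at he
      rcases Finset.mem_union.mp he with h | h
      · exact (honH e h).trans (Finset.erase_subset _ _)
      · obtain ⟨S, hS, rfl⟩ := Finset.mem_image.mp h
        rw [Finset.insert_subset_iff]
        refine ⟨hv, ?_⟩
        intro z hz
        have hzU : z ∈ D.sup id := Finset.mem_sup.mpr ⟨S, hS, hz⟩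
        exact Finset.mem_of_mem_erase (hvD.2.2.1 hzU)
    · intro G hG
      apply hf_ext
      have hrecover : (hfsub G (fun e => v ∉ e)).edges ∪
          ((G.edges.filter (fun e => v ∈ e)).image (fun e => e.erase v)).image (insert v ·)
          = G.edges := by
        rw [hfsub_edges, Finset.image_image]
        have himg : (G.edges.filter (fun e => v ∈ e)).image ((insert v ·) ∘ (fun e => e.erase v))
            = G.edges.filter (fun e => v ∈ e) := by
          refine Eq.trans ?_ (Finset.image_id)
          apply Finset.image_congr
          intro e he
          have hem := Finset.mem_coe.mp he
          rw [mem_filter] at hem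
          show insert v (e.erase v) = e
          exact Finset.insert_erase hem.2
        rw [himg, Finset.union_comm, Finset.filter_union_filter_not_eq]
      rw [mkHF_edges _ ⟨G, hrecover.symm⟩]
      exact hrecover
    · rintro ⟨H, D⟩ hx
      rw [mem_filter] at hx
      obtain ⟨-, honH, hvD⟩ := hx
      have hex := exists_glue H t v honH D hvD
      have hedges := mkHF_edges (E := H.edges ∪ D.image (insert v ·)) H hex
      have hvHe : ∀ e ∈ H.edges, v ∉ e := fun e he hv' =>
        (Finset.mem_erase.mp (honH e he hv')).1 rfl
      have hvSD : ∀ S ∈ D, v ∉ S := by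
        intro S hS hv'
        have hmem : v ∈ D.sup id := Finset.mem_sup.mpr ⟨S, hS, hv'⟩
        exact (Finset.mem_erase.mp (hvD.2.2.1 hmem)).1 rfl
      apply Prod.ext
      · apply hf_ext
        show (hfsub (mkHF (H.edges ∪ D.image (insert v ·)) H) (fun e => v ∉ e)).edges = H.edges
        rw [hfsub_edges, hedges, Finset.filter_union,
          Finset.filter_true_of_mem hvHe]
        rw [Finset.filter_false_of_mem (s := D.image (insert v ·))
          (fun e he => by
            obtain ⟨S, hS, rfl⟩ := Finset.mem_image.mp he
            exact not_not_intro (Finset.mem_insert_self v S)), Finset.union_empty]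
      · show (((mkHF (H.edges ∪ D.image (insert v ·)) H).edges.filter
            (fun e => v ∈ e)).image (fun e => e.erase v)) = D
        rw [hedges, Finset.filter_union, Finset.filter_false_of_mem hvHe]
        rw [Finset.filter_true_of_mem
          (fun e he => by
            obtain ⟨S, hS, rfl⟩ := Finset.mem_image.mp he
            exact Finset.mem_insert_self v S), Finset.empty_union, Finset.image_image]
        refine Eq.trans ?_ (Finset.image_id)
        apply Finset.image_congr
        intro S hS
        show (insert v S).erase v = S
        exact Finset.erase_insert (hvSD S (Finset.mem_coe.mp hS))
    · intro G hG
      rw [mem_filter] at hG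
      have hinjOn : ∀ e ∈ G.edges.filter (fun e => v ∈ e),
          ∀ f ∈ G.edges.filter (fun e => v ∈ e), e.erase v = f.erase v → e = f := by
        intro e he f hf h
        rw [mem_filter] at he hf
        rw [← Finset.insert_erase he.2, ← Finset.insert_erase hf.2, h]
      calc hfw G = ∏ e ∈ G.edges.filter (fun e => v ∉ e) ∪ G.edges.filter (fun e => v ∈ e),
            -(((e.card - 2).factorial : ℕ) : ℤ) := by
            rw [hfw]
            congr 1
            rw [Finset.union_comm, Finset.filter_union_filter_not_eq]
      _ = (∏ e ∈ G.edges.filter (fun e => v ∉ e), -(((e.card - 2).factorial : ℕ) : ℤ)) *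
          (∏ e ∈ G.edges.filter (fun e => v ∈ e), -(((e.card - 2).factorial : ℕ) : ℤ)) :=
            Finset.prod_union
              ((Finset.disjoint_filter_filter_not G.edges G.edges (fun e => v ∈ e)).symm)
      _ = _ := by
            rw [hfw, hfsub_edges]
            congr 1
            rw [pprod, Finset.prod_image hinjOn]
            apply Finset.prod_congr rfl
            intro e he
            rw [mem_filter] at he
            rw [pw, Finset.card_erase_of_mem he.2,
              show e.card - 1 - 1 = e.card - 2 from by omega]
  have hiter : ∑ x ∈ (univ ×ˢ univ).filter
      (fun x : Hyperforest V × Finset (Finset V) =>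
        onSet x.1 (t.erase v) ∧ validD x.1 t v x.2),
      hfw x.1 * pprod x.2
      = ∑ H ∈ univ.filter (fun H : Hyperforest V => onSet H (t.erase v)),
          ∑ D ∈ univ.filter (fun D => validD H t v D), hfw H * pprod D := by
    rw [Finset.sum_filter, Finset.sum_product]
    conv_rhs => rw [Finset.sum_filter]
    apply Finset.sum_congr rfl
    intro H _
    by_cases hH : onSet H (t.erase v)
    · rw [if_pos hH, Finset.sum_filter]
      apply Finset.sum_congr rfl
      intro D _
      by_cases hD : validD H t v D
      · rw [if_pos ⟨hH, hD⟩, if_pos hD]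
      · rw [if_neg (fun hc => hD hc.2), if_neg hD]
    · rw [if_neg hH]
      apply Finset.sum_eq_zero
      intro D _
      rw [if_neg (fun hc => hH hc.1)]
  rw [hbij, hiter]
  have hin : ∀ H ∈ univ.filter (fun H : Hyperforest V => onSet H (t.erase v)),
      ∑ D ∈ univ.filter (fun D => validD H t v D), hfw H * pprod D
        = hfw H * (2 - (t.card : ℤ)) := by
    intro H _
    rw [← Finset.mul_sum, inner_sum H t v hv]
  rw [Finset.sum_congr rfl hin, hfsum, ← Finset.sum_mul]
  ring

theorem hfsum_small (t : Finset V) (ht : t.card ≤ 1) : hfsum t = 1 := by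
  have hempty : ∃ F : Hyperforest V, F.edges = ∅ :=
    ⟨⟨∅, by simp, by simp, by
      intro k c hc hadj
      obtain ⟨e, he, _⟩ := hadj 0
      simp at he⟩, rfl⟩
  obtain ⟨F0, hF0⟩ := hempty
  have hset : univ.filter (fun G : Hyperforest V => onSet G t) = {F0} := by
    ext G
    simp only [mem_filter, mem_univ, true_and, mem_singleton]
    constructor
    · intro hG
      apply hf_ext
      rw [hF0]
      rw [Finset.eq_empty_iff_forall_notMem]
      intro e he
      have h1 := G.two_le e he
      have h2 := Finset.card_le_card (hG e he)
      omega
    · rintro rfl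
      intro e he
      rw [hF0] at he
      simp at he
  rw [hfsum, hset, Finset.sum_singleton, hfw, hF0, Finset.prod_empty]

theorem hfsum_zero (t : Finset V) (ht : 2 ≤ t.card) : hfsum t = 0 := by
  have key : ∀ m : ℕ, ∀ t : Finset V, t.card ≤ m → 2 ≤ t.card → hfsum t = 0 := by
    intro m
    induction m with
    | zero => intro t h1 h2; omega
    | succ m ih =>
      intro t h1 h2
      obtain ⟨v, hv⟩ : t.Nonempty := Finset.card_pos.mp (by omega)
      rw [hfsum_rec t v hv]
      by_cases h3 : t.card = 2
      · rw [h3]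
        norm_num
      · have he1 : (t.erase v).card = t.card - 1 := Finset.card_erase_of_mem hv
        rw [ih (t.erase v) (by omega) (by omega), mul_zero]
  exact key t.card t le_rfl ht

/- ### the order -/

lemma HFle_refl (F : Hyperforest V) : HFle F F := fun e he => ⟨e, he, subset_rfl⟩

lemma HFle_trans {F G H : Hyperforest V} (h1 : HFle F G) (h2 : HFle G H) : HFle F H := by
  intro e he
  obtain ⟨f, hf, hef⟩ := h1 e he
  obtain ⟨g, hg, hfg⟩ := h2 f hf
  exact ⟨g, hg, hef.trans hfg⟩

lemma HFle_antisymm {F G : Hyperforest V} (h1 : HFle F G) (h2 : HFle G F) : F = G := by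
  have key : ∀ (A B : Hyperforest V), HFle A B → HFle B A → ∀ e ∈ A.edges, e ∈ B.edges := by
    intro A B hAB hBA e he
    obtain ⟨f, hf, hef⟩ := hAB e he
    obtain ⟨g, hg, hfg⟩ := hBA f hf
    have heg : e ⊆ g := hef.trans hfg
    have hege : e = g := by
      by_contra hne
      have hi := A.inter e he g hg hne
      have hee : e ∩ g = e := Finset.inter_eq_left.mpr heg
      have h2e := A.two_le e he
      rw [hee] at hi
      omega
    have hfe : f = e := Finset.Subset.antisymm (hege ▸ hfg) hef
    exact hfe ▸ hf
  apply hf_ext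
  exact Finset.Subset.antisymm (fun e he => key F G h1 h2 e he) (fun e he => key G F h2 h1 e he)

theorem exists_split_union (F G Hr : Hyperforest V) (e₀ : Finset V) (he₀ : e₀ ∈ F.edges)
    (hG : onSet G e₀) (hHr : HFle Hr F) (hHe : ∀ e ∈ Hr.edges, ¬ e ⊆ e₀) :
    ∃ F' : Hyperforest V, F'.edges = G.edges ∪ Hr.edges := by
  refine ⟨⟨G.edges ∪ Hr.edges, ?_, ?_, ?_⟩, rfl⟩
  · intro e he
    rcases Finset.mem_union.mp he with h | h
    exacts [G.two_le e h, Hr.two_le e h]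
  · have cross : ∀ g ∈ G.edges, ∀ h ∈ Hr.edges, (g ∩ h).card ≤ 1 := by
      intro g hg h hh
      obtain ⟨f, hf, hhf⟩ := hHr h hh
      have hfe : e₀ ≠ f := by
        rintro rfl
        exact hHe h hh hhf
      calc (g ∩ h).card ≤ (e₀ ∩ f).card :=
            Finset.card_le_card (Finset.inter_subset_inter (hG g hg) hhf)
      _ ≤ 1 := F.inter e₀ he₀ f hf hfe
    intro e he f hf hef
    rcases Finset.mem_union.mp he with h1 | h1 <;> rcases Finset.mem_union.mp hf with h2 | h2
    · exact G.inter e h1 f h2 hef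
    · exact cross e h1 f h2
    · rw [Finset.inter_comm]; exact cross f h2 e h1
    · exact Hr.inter e h1 f h2 hef
  · intro k c hc hadj
    have hadjF : ∀ j : Fin (k+3), ∃ e ∈ F.edges, c j ∈ e ∧ c (j+1) ∈ e := by
      intro j
      obtain ⟨x, hx, h1, h2⟩ := hadj j
      rcases Finset.mem_union.mp hx with h | h
      · exact ⟨e₀, he₀, hG x h h1, hG x h h2⟩
      · obtain ⟨f, hf, hxf⟩ := hHr x h
        exact ⟨f, hf, hxf h1, hxf h2⟩
    obtain ⟨e, he, hall⟩ := F.cycles k c hc hadjF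
    have hwit : ∀ j : Fin (k+3), ∀ x, x ∈ G.edges ∪ Hr.edges → c j ∈ x → c (j+1) ∈ x → x ⊆ e := by
      intro j x hx h1 h2
      rcases Finset.mem_union.mp hx with h | h
      · have hxe : x ⊆ e₀ := hG x h
        by_cases he0 : e₀ = e
        · exact he0 ▸ hxe
        · exfalso
          have h2c : 2 ≤ (e₀ ∩ e).card :=
            two_le_inter_card (cyc_succ_ne hc j) (hxe h1) (hxe h2) (hall j) (hall (j+1))
          have := F.inter e₀ he₀ e he he0
          omega
      · obtain ⟨f, hf, hxf⟩ := hHr x h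
        by_cases hfe : f = e
        · exact hfe ▸ hxf
        · exfalso
          have h2c : 2 ≤ (f ∩ e).card :=
            two_le_inter_card (cyc_succ_ne hc j) (hxf h1) (hxf h2) (hall j) (hall (j+1))
          have := F.inter f hf e he hfe
          omega
    by_cases hcase : e = e₀
    · have hGadj : ∀ j : Fin (k+3), ∃ x ∈ G.edges, c j ∈ x ∧ c (j+1) ∈ x := by
        intro j
        obtain ⟨x, hx, h1, h2⟩ := hadj j
        rcases Finset.mem_union.mp hx with h | h
        · exact ⟨x, h, h1, h2⟩
        · exfalso
          exact hHe x h (hcase ▸ hwit j x hx h1 h2)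
      obtain ⟨g, hg, hgall⟩ := G.cycles k c hc hGadj
      exact ⟨g, Finset.mem_union_left _ hg, hgall⟩
    · have hHadj : ∀ j : Fin (k+3), ∃ x ∈ Hr.edges, c j ∈ x ∧ c (j+1) ∈ x := by
        intro j
        obtain ⟨x, hx, h1, h2⟩ := hadj j
        rcases Finset.mem_union.mp hx with h | h
        · exfalso
          have hxe := hwit j x hx h1 h2
          have h2c : 2 ≤ (e₀ ∩ e).card :=
            two_le_inter_card (cyc_succ_ne hc j) (hG x h h1) (hG x h h2) (hxe h1) (hxe h2)
          have := F.inter e₀ he₀ e he (fun hh => hcase hh.symm)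
          omega
        · exact ⟨x, h, h1, h2⟩
      obtain ⟨g, hg, hgall⟩ := Hr.cycles k c hc hHadj
      exact ⟨g, Finset.mem_union_right _ hg, hgall⟩

theorem sum_le_eq_zero (F : Hyperforest V) (hne : F.edges.Nonempty) :
    ∑ F' ∈ univ.filter (fun F' => HFle F' F), hfw F' = 0 := by
  obtain ⟨e₀, he₀⟩ := hne
  have h2 : 2 ≤ e₀.card := F.two_le _ he₀
  set B := univ.filter (fun G : Hyperforest V => onSet G e₀) with hB
  set C := univ.filter
    (fun Hr : Hyperforest V => HFle Hr F ∧ ∀ e ∈ Hr.edges, ¬ e ⊆ e₀) with hC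
  have hmain : ∑ F' ∈ univ.filter (fun F' => HFle F' F), hfw F'
      = ∑ x ∈ B ×ˢ C, hfw x.1 * hfw x.2 := by
    apply Finset.sum_nbij'
      (i := fun F' => (hfsub F' (fun e => e ⊆ e₀), hfsub F' (fun e => ¬ e ⊆ e₀)))
      (j := fun x => mkHF (x.1.edges ∪ x.2.edges) x.1)
    · -- hi
      intro F' hF'
      simp only [mem_filter, mem_univ, true_and] at hF'
      rw [Finset.mem_product]
      constructor
      · rw [hB, mem_filter]
        refine ⟨mem_univ _, ?_⟩
        intro e he
        rw [hfsub_edges, mem_filter] at he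
        exact he.2
      · rw [hC, mem_filter]
        refine ⟨mem_univ _, ?_, ?_⟩
        · intro e he
          rw [hfsub_edges, mem_filter] at he
          exact hF' e he.1
        · intro e he
          rw [hfsub_edges, mem_filter] at he
          exact he.2
    · -- hj
      intro x hx
      rw [Finset.mem_product, hB, hC, mem_filter, mem_filter] at hx
      obtain ⟨⟨-, hx1⟩, -, hx2, hx3⟩ := hx
      have hex := exists_split_union F x.1 x.2 e₀ he₀ hx1 hx2 hx3
      simp only [mem_filter, mem_univ, true_and]
      intro e he
      rw [mkHF_edges _ hex] at he
      rcases Finset.mem_union.mp he with h | h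
      · exact ⟨e₀, he₀, hx1 e h⟩
      · exact hx2 e h
    · -- left_inv
      intro F' hF'
      apply hf_ext
      have hex : ∃ Fu : Hyperforest V,
          Fu.edges = (hfsub F' (fun e => e ⊆ e₀)).edges ∪ (hfsub F' (fun e => ¬ e ⊆ e₀)).edges :=
        ⟨F', by rw [hfsub_edges, hfsub_edges, Finset.filter_union_filter_not_eq]⟩
      rw [mkHF_edges _ hex, hfsub_edges, hfsub_edges, Finset.filter_union_filter_not_eq]
    · -- right_inv
      intro x hx
      rw [Finset.mem_product, hB, hC, mem_filter, mem_filter] at hx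
      obtain ⟨⟨-, hx1⟩, -, hx2, hx3⟩ := hx
      have hex := exists_split_union F x.1 x.2 e₀ he₀ hx1 hx2 hx3
      have hedges := mkHF_edges x.1 hex
      have h1 : (hfsub (mkHF (x.1.edges ∪ x.2.edges) x.1) (fun e => e ⊆ e₀)).edges = x.1.edges := by
        rw [hfsub_edges, hedges, Finset.filter_union]
        rw [Finset.filter_true_of_mem (fun e he => hx1 e he),
          Finset.filter_false_of_mem (fun e he => hx3 e he), Finset.union_empty]
      have h2' : (hfsub (mkHF (x.1.edges ∪ x.2.edges) x.1) (fun e => ¬ e ⊆ e₀)).edges = x.2.edges := by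
        rw [hfsub_edges, hedges, Finset.filter_union]
        rw [Finset.filter_false_of_mem (fun e he => not_not_intro (hx1 e he)),
          Finset.filter_true_of_mem (fun e he => hx3 e he), Finset.empty_union]
      exact Prod.ext (hf_ext h1) (hf_ext h2')
    · -- weights
      intro F' hF'
      have hdisj : Disjoint (F'.edges.filter (fun e => e ⊆ e₀))
          (F'.edges.filter (fun e => ¬ e ⊆ e₀)) := Finset.disjoint_filter_filter_not _ _ _
      rw [hfw, hfw, hfw, hfsub_edges, hfsub_edges, ← Finset.prod_union hdisj,
        Finset.filter_union_filter_not_eq]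
  rw [hmain, Finset.sum_product]
  have : ∑ a ∈ B, ∑ b ∈ C, hfw a * hfw b = (∑ a ∈ B, hfw a) * (∑ b ∈ C, hfw b) := by
    rw [Finset.sum_mul_sum]
  rw [this]
  have hBz : ∑ a ∈ B, hfw a = 0 := hfsum_zero e₀ h2
  rw [hBz, zero_mul]

theorem mu_eq_hfw (μ : Hyperforest V → ℤ)
    (hbot : ∀ F : Hyperforest V, F.edges = ∅ → μ F = 1)
    (hrec : ∀ F : Hyperforest V, F.edges ≠ ∅ →
      μ F = -∑ F' ∈ univ.filter (fun F' => HFle F' F ∧ F' ≠ F), μ F') :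
    ∀ F, μ F = hfw F := by
  have key : ∀ (N : ℕ) (F : Hyperforest V),
      (univ.filter (fun G => HFle G F)).card ≤ N → μ F = hfw F := by
    intro N
    induction N with
    | zero =>
      intro F hF
      exfalso
      have hmem : F ∈ univ.filter (fun G => HFle G F) := by
        simp [HFle_refl]
      have := Finset.card_pos.mpr ⟨F, hmem⟩
      omega
    | succ N ih =>
      intro F hF
      by_cases h0 : F.edges = ∅
      · rw [hbot F h0, hfw, h0, Finset.prod_empty]
      · have hsub : ∀ F' : Hyperforest V, HFle F' F → F' ≠ F → μ F' = hfw F' := by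
          intro F' h1 h2
          apply ih
          have hss : univ.filter (fun G => HFle G F') ⊂ univ.filter (fun G => HFle G F) := by
            constructor
            · intro G hG
              simp only [mem_filter, mem_univ, true_and] at hG ⊢
              exact HFle_trans hG h1
            · intro hcon
              have hmem : F ∈ univ.filter (fun G => HFle G F') := by
                apply hcon
                simp [HFle_refl]
              simp only [mem_filter, mem_univ, true_and] at hmem
              exact h2 (HFle_antisymm h1 hmem)
          have := Finset.card_lt_card hss
          omega
        rw [hrec F h0]
        have hDn : univ.filter (fun F' => HFle F' F ∧ F' ≠ F)
            = (univ.filter (fun G => HFle G F)).erase F := by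
          ext G
          simp only [mem_filter, mem_univ, true_and, Finset.mem_erase]
          tauto
        have hsum : ∑ F' ∈ univ.filter (fun F' => HFle F' F ∧ F' ≠ F), μ F'
            = ∑ F' ∈ univ.filter (fun F' => HFle F' F ∧ F' ≠ F), hfw F' := by
          apply Finset.sum_congr rfl
          intro F' hF'
          simp only [mem_filter, mem_univ, true_and] at hF'
          exact hsub F' hF'.1 hF'.2
        rw [hsum, hDn]
        have hLe := sum_le_eq_zero F (Finset.nonempty_iff_ne_empty.mpr h0)
        have hadd := Finset.add_sum_erase _ hfw
          (show F ∈ univ.filter (fun G => HFle G F) by simp [HFle_refl])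
        rw [hLe] at hadd
        linarith
  intro F
  exact key _ F le_rfl

end HFAux

/-- The Möbius function value of the hyperforest `K_n` consisting of the single
hyperedge `{1, …, n}` (`n ≥ 2`) in the poset of hyperforests on `n` labelled
vertices equals `-(n-2)!`. -/
theorem stmt14 (n : ℕ) (hn : 2 ≤ n)
    (μ : Hyperforest (Fin n) → ℤ)
    (hbot : ∀ F : Hyperforest (Fin n), F.edges = ∅ → μ F = 1)
    (hrec : ∀ F : Hyperforest (Fin n), F.edges ≠ ∅ →
      μ F = -∑ᶠ F' ∈ {F' : Hyperforest (Fin n) | HFle F' F ∧ F' ≠ F}, μ F')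
    (K : Hyperforest (Fin n)) (hK : K.edges = {Finset.univ}) :
    μ K = -(((n - 2).factorial : ℕ) : ℤ) := by
  classical
  have hrec' : ∀ F : Hyperforest (Fin n), F.edges ≠ ∅ →
      μ F = -∑ F' ∈ Finset.univ.filter (fun F' => HFle F' F ∧ F' ≠ F), μ F' := by
    intro F hF
    rw [hrec F hF]
    congr 1
    rw [← finsum_mem_coe_finset]
    congr 1
    ext F'
    simp
  have := HFAux.mu_eq_hfw μ hbot hrec' K
  rw [this, HFAux.hfw, hK, Finset.prod_singleton, Finset.card_univ, Fintype.card_fin]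
end

section
/- Define polynomials q_i(x,y) by q_1 = 0, q_2 = x, and q_i(x,y) = x((i-2+y) q_{i-1}(x,y) + (i-3) q_{i-2}(x,y)) for i ≥ 3. Then for every nonzero κ and all i ≥ 2: (-1)^i q_i(κ, -(κ+1)/κ) / κ = 1, and (-1)^i q_i(κ, -(2κ+1)/κ) / κ = 1 + (i-2)κ. -/
/-- The polynomials `q_i(x,y)` defined by `q_1 = 0`, `q_2 = x` and
`q_i(x,y) = x ((i-2+y) q_{i-1}(x,y) + (i-3) q_{i-2}(x,y))` for `i ≥ 3`,
evaluated in a field. -/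
def qpoly {F : Type*} [Field F] : ℕ → F → F → F
  | 0, _, _ => 0
  | 1, _, _ => 0
  | 2, x, _ => x
  | i + 3, x, y =>
      x * (((i : F) + 1 + y) * qpoly (i + 2) x y + (i : F) * qpoly (i + 1) x y)

lemma qpoly_key {F : Type*} [Field F] (κ : F) (hκ : κ ≠ 0) (n : ℕ) :
    (qpoly (n+2) κ (-(κ+1)/κ) = (-1)^(n+2) * κ ∧
      qpoly (n+2) κ (-(2*κ+1)/κ) = (-1)^(n+2) * (κ + n * κ^2)) ∧
    (qpoly (n+3) κ (-(κ+1)/κ) = (-1)^(n+3) * κ ∧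
      qpoly (n+3) κ (-(2*κ+1)/κ) = (-1)^(n+3) * (κ + (n+1) * κ^2)) := by
  induction n with
  | zero =>
    refine ⟨⟨by simp [qpoly], by simp [qpoly]⟩, ?_, ?_⟩ <;>
      · show qpoly (0+3) κ _ = _
        simp only [qpoly]
        field_simp
        ring
  | succ n ih =>
    obtain ⟨⟨h1, h2⟩, h3, h4⟩ := ih
    refine ⟨⟨h3, by convert h4 using 3; push_cast; ring⟩, ?_, ?_⟩
    · show qpoly (n+1+3) κ _ = _
      rw [qpoly, show n+1+2 = n+3 from rfl, show n+1+1 = n+2 from rfl, h1, h3]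
      push_cast
      field_simp
      ring
    · show qpoly (n+1+3) κ _ = _
      rw [qpoly, show n+1+2 = n+3 from rfl, show n+1+1 = n+2 from rfl, h2, h4]
      push_cast
      field_simp
      ring

/-- For every nonzero `κ` and all `i ≥ 2`:
`(-1)^i q_i(κ, -(κ+1)/κ)/κ = 1` and `(-1)^i q_i(κ, -(2κ+1)/κ)/κ = 1 + (i-2)κ`. -/
theorem stmt18 {F : Type*} [Field F] (κ : F) (hκ : κ ≠ 0) (i : ℕ) (hi : 2 ≤ i) :
    (-1 : F) ^ i * qpoly i κ (-(κ + 1) / κ) / κ = 1 ∧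
      (-1 : F) ^ i * qpoly i κ (-(2 * κ + 1) / κ) / κ = 1 + ((i : F) - 2) * κ := by
  obtain ⟨n, rfl⟩ : ∃ n, i = n + 2 := ⟨i - 2, by omega⟩
  obtain ⟨⟨h1, h2⟩, -⟩ := qpoly_key κ hκ n
  have hs : (-1 : F)^(n+2) * (-1 : F)^(n+2) = 1 := by
    rw [← pow_add, show n+2+(n+2) = 2*(n+2) by ring, pow_mul]; norm_num
  constructor
  · rw [h1, ← mul_assoc, hs, one_mul, div_self hκ]
  · rw [h2, ← mul_assoc, hs, one_mul]
    push_cast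
    field_simp
    ring
end
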